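/- arXiv:2301.13040 — 3 statements merged into one kernel-verified Lean document; each statement's English description precedes it below -/
import Mathlib

section
/- Let k be a field, let s, m, n ≥ 0 be integers, and let S = k[x_0, x_1, …, x_s]. Let P, Q ∈ S[z], and let H_P and H_Q be the hypersurfaces in A^{s+3}_k = Spec(S[y, z]) defined by x_0^n y = P(x_0, …, x_s, z) and x_0^n y = Q(x_0, …, x_s, z), respectively. Suppose there exist A, B ∈ S[z] such that: (1) z − A(B(z)) and z − B(A(z)) both belong to the ideal x_0^m S[z]; (2) Q(A(z) + x_0^m w) ∈ x_0^n S[z, w] + P(z) S[z, w] and P(B(z) + x_0^m w) ∈ x_0^n S[z, w] + Q(z) S[z, w], where w is a new variable. Then the maps Φ: H_P × A^1 → H_Q × A^1, (x_0, …, x_s, y, z, w) ↦ (x_0, …, x_s, Q(A(z) + x_0^m w)/x_0^n, A(z) + x_0^m w, (z − B(A(z) + x_0^m w))/x_0^m), and Ψ: H_Q × A^1 → H_P × A^1, (x_0, …, x_s, y, z, w) ↦ (x_0, …, x_s, P(B(z) + x_0^m w)/x_0^n, B(z) + x_0^m w, (z − A(B(z) + x_0^m w))/x_0^m), are well-defined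 inverse isomorphisms. -/
/-!
Set-up for Lemma 3.1: `S = k[x_0, …, x_s]`, and the coordinate ring
`S[y, z, w]` of `A^{s+3} × A^1`, realized as `MvPolynomial (Fin 3) S` with the
variables `0 = y`, `1 = z`, `2 = w`.  The hypersurface `H_P ⊆ A^{s+3}` is given by
`x_0^n y = P(x_0, …, x_s, z)`, so that `H_P × A^1 = Spec (S[y,z,w] / (x_0^n y - P))`.
A morphism `H_P × A^1 → H_Q × A^1` is the same as a `S`-algebra homomorphism between
the corresponding quotient rings (in the opposite direction).
-/

open MvPolynomial

set_option maxHeartbeats 1000000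

noncomputable section

/-- `S = k[x_0, …, x_s]`. -/
abbrev SRing (k : Type) [Field k] (s : ℕ) := MvPolynomial (Fin (s + 1)) k

/-- `S[y, z, w]`, the coordinate ring of `A^{s+3} × A^1 = Spec S[y] × A^1_z × A^1_w`;
variable `0` is `y`, variable `1` is `z` and variable `2` is `w`. -/
abbrev RRing (k : Type) [Field k] (s : ℕ) := MvPolynomial (Fin 3) (SRing k s)

/-- The element `x_0 ∈ S`. -/
def x₀ (k : Type) [Field k] (s : ℕ) : SRing k s := MvPolynomial.X 0

/-- The variable `y ∈ S[y,z,w]`. -/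
def vy (k : Type) [Field k] (s : ℕ) : RRing k s := MvPolynomial.X 0

/-- The variable `z ∈ S[y,z,w]`. -/
def vz (k : Type) [Field k] (s : ℕ) : RRing k s := MvPolynomial.X 1

/-- The variable `w ∈ S[y,z,w]`. -/
def vw (k : Type) [Field k] (s : ℕ) : RRing k s := MvPolynomial.X 2

/-- Substitution of `t ∈ S[y,z,w]` for the variable `z` in a polynomial `p ∈ S[z]`. -/
def evalZ {k : Type} [Field k] {s : ℕ} (p : Polynomial (SRing k s)) (t : RRing k s) :
    RRing k s :=
  Polynomial.eval₂ MvPolynomial.C t p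

/-- The ideal `(x_0^n y - P(z))` of `S[y,z,w]` defining `H_P × A^1`. -/
def coneIdeal {k : Type} [Field k] {s : ℕ} (n : ℕ) (P : Polynomial (SRing k s)) :
    Ideal (RRing k s) :=
  Ideal.span {MvPolynomial.C (x₀ k s ^ n) * vy k s - evalZ P (vz k s)}

namespace Lemma31

/-- Abstract cofactor-correction lemma: if `¬ xⁿ ∣ f` then `β₀` is a unit modulo `xⁿ`
and the cofactors can be corrected to a pair with product `≡ 1 (mod xⁿ)`. -/
theorem core_aux {D : Type*} [CommRing D] [IsDomain D] {x : D} (hx : Prime x) (n : ℕ)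
    {f g α₀ β₀ α₀' γ₀ : D}
    (h1 : f = x ^ n * α₀ + g * β₀) (h2 : g = x ^ n * α₀' + f * γ₀)
    (hf : ¬ x ^ n ∣ f) :
    ∃ bb gg aa aa' hh : D, f - g * bb = x ^ n * aa ∧ g - f * gg = x ^ n * aa' ∧
      bb * gg = 1 + x ^ n * hh := by
  have key : f * (1 - γ₀ * β₀) = x ^ n * (α₀ + α₀' * β₀) := by
    linear_combination h1 + β₀ * h2
  have hxd : x ∣ 1 - γ₀ * β₀ := by
    by_contra hnd
    exact hf (hx.pow_dvd_of_dvd_mul_right n hnd ⟨_, key⟩)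
  obtain ⟨d, hd⟩ := hxd
  obtain ⟨u, hu⟩ : (1 - x * d : D) ∣ 1 - (x * d) ^ n := by
    simpa using sub_dvd_pow_sub_pow (1 : D) (x * d) n
  rw [mul_pow] at hu
  have hβγ : β₀ * (γ₀ * u) = 1 + x ^ n * (-(d ^ n)) := by
    linear_combination -hu - u * hd
  have hnb : ¬ x ∣ β₀ := by
    intro hxb
    refine hx.not_unit (isUnit_of_dvd_one ?_)
    have h1' : (1 : D) = γ₀ * β₀ + x * d := by linear_combination hd
    rw [h1']
    exact dvd_add (hxb.mul_left γ₀) (dvd_mul_right x d)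
  have hmul : β₀ * (g - f * (γ₀ * u)) = x ^ n * (f * d ^ n - α₀) := by
    linear_combination -h1 - f * hβγ
  obtain ⟨aa', haa'⟩ := hx.pow_dvd_of_dvd_mul_left n hnb ⟨_, hmul⟩
  exact ⟨β₀, γ₀ * u, α₀, aa', -(d ^ n), by linear_combination h1, haa', hβγ⟩

/-- Corrected cofactors exist in all cases. -/
theorem core {D : Type*} [CommRing D] [IsDomain D] {x : D} (hx : Prime x) (n : ℕ)
    {f g α₀ β₀ α₀' γ₀ : D}
    (h1 : f = x ^ n * α₀ + g * β₀) (h2 : g = x ^ n * α₀' + f * γ₀) :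
    ∃ bb gg aa aa' hh : D, f - g * bb = x ^ n * aa ∧ g - f * gg = x ^ n * aa' ∧
      bb * gg = 1 + x ^ n * hh := by
  by_cases hf : x ^ n ∣ f
  · by_cases hg : x ^ n ∣ g
    · obtain ⟨c, hc⟩ := hf
      obtain ⟨c', hc'⟩ := hg
      exact ⟨1, 1, c - c', c' - c, 0, by linear_combination hc - hc',
        by linear_combination hc' - hc, by ring⟩
    · obtain ⟨bb, gg, aa, aa', hh, e1, e2, e3⟩ := core_aux hx n h2 h1 hg
      exact ⟨gg, bb, aa', aa, hh, e2, e1, by linear_combination e3⟩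
  · exact core_aux hx n h1 h2 hf

section Helpers
variable {k : Type} [Field k] {s : ℕ}

theorem evalZ_aeval (p : Polynomial (SRing k s)) (t : RRing k s) :
    evalZ p t = Polynomial.aeval t p := by
  rw [evalZ, Polynomial.aeval_def, MvPolynomial.algebraMap_eq]

/-- The `S`-algebra endomorphism of `S[y,z,w]` determined by `y ↦ a`, `z ↦ b`, `w ↦ c`. -/
def subst (a b c : RRing k s) : RRing k s →ₐ[SRing k s] RRing k s :=
  aeval ![a, b, c]

@[simp] theorem subst_vy (a b c : RRing k s) : subst a b c (vy k s) = a := by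
  simp [subst, vy]
@[simp] theorem subst_vz (a b c : RRing k s) : subst a b c (vz k s) = b := by
  simp [subst, vz]
@[simp] theorem subst_vw (a b c : RRing k s) : subst a b c (vw k s) = c := by
  simp [subst, vw]

theorem hom_aeval (φ : RRing k s →ₐ[SRing k s] RRing k s) (p : Polynomial (SRing k s))
    (t : RRing k s) : φ (Polynomial.aeval t p) = Polynomial.aeval (φ t) p :=
  (Polynomial.aeval_algHom_apply φ t p).symm

theorem homC (φ : RRing k s →ₐ[SRing k s] RRing k s) (r : SRing k s) :
    φ (MvPolynomial.C r) = MvPolynomial.C r := by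
  rw [← MvPolynomial.algebraMap_eq]; exact φ.commutes r

theorem ext3 {A : Type*} [Semiring A] [Algebra (SRing k s) A]
    {f g : RRing k s →ₐ[SRing k s] A}
    (h0 : f (vy k s) = g (vy k s)) (h1 : f (vz k s) = g (vz k s))
    (h2 : f (vw k s) = g (vw k s)) : f = g := by
  apply MvPolynomial.algHom_ext
  intro i
  fin_cases i
  exacts [h0, h1, h2]

theorem prime_x0C : Prime (MvPolynomial.C (x₀ k s) : RRing k s) := by
  rw [MvPolynomial.prime_C_iff]
  rw [x₀, ← MulEquiv.prime_iff (e := (MvPolynomial.finSuccEquiv k s).toMulEquiv)]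
  show Prime (MvPolynomial.finSuccEquiv k s (X 0))
  rw [MvPolynomial.finSuccEquiv_X_zero]
  exact Polynomial.prime_X

theorem hsub (p : Polynomial (SRing k s)) (t u : RRing k s) :
    u ∣ Polynomial.aeval (t + u) p - Polynomial.aeval t p := by
  have h := Polynomial.sub_dvd_eval_sub (t + u) t (p.map MvPolynomial.C)
  rw [add_sub_cancel_left] at h
  simpa only [Polynomial.eval_map, ← MvPolynomial.algebraMap_eq,
    ← Polynomial.aeval_def] using h

/-- Package a pair of quotient algebra maps into an `AlgEquiv`. -/
theorem assemble {IQ IP : Ideal (RRing k s)}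
    (σh τh : RRing k s →ₐ[SRing k s] RRing k s)
    (h1 : IQ ≤ IP.comap σh) (h2 : IP ≤ IQ.comap τh)
    (hts : (Ideal.Quotient.mkₐ (SRing k s) IQ).comp (τh.comp σh)
      = Ideal.Quotient.mkₐ (SRing k s) IQ)
    (hst : (Ideal.Quotient.mkₐ (SRing k s) IP).comp (σh.comp τh)
      = Ideal.Quotient.mkₐ (SRing k s) IP) :
    ∃ e : (RRing k s ⧸ IQ) ≃ₐ[SRing k s] (RRing k s ⧸ IP),
      (∀ t, e (Ideal.Quotient.mk IQ t) = Ideal.Quotient.mk IP (σh t)) ∧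
      (∀ t, e.symm (Ideal.Quotient.mk IP t) = Ideal.Quotient.mk IQ (τh t)) := by
  refine ⟨AlgEquiv.ofAlgHom (Ideal.quotientMapₐ IP σh h1) (Ideal.quotientMapₐ IQ τh h2)
    ?_ ?_, fun t => rfl, fun t => rfl⟩
  · apply Ideal.Quotient.algHom_ext
    apply AlgHom.ext
    intro t
    have h := AlgHom.congr_fun hst t
    simpa using h
  · apply Ideal.Quotient.algHom_ext
    apply AlgHom.ext
    intro t
    have h := AlgHom.congr_fun hts t
    simpa using h

end Helpers
end Lemma31

open Lemma31

set_option maxHeartbeats 4000000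

/-- **Lemma 3.1.**  Suppose `z - A(B(z))` and `z - B(A(z))` lie in `x_0^m S[z]`, and
`Q(A(z) + x_0^m w) ∈ x_0^n S[z,w] + P(z) S[z,w]`,
`P(B(z) + x_0^m w) ∈ x_0^n S[z,w] + Q(z) S[z,w]`.  Then the maps
`Φ : H_P × A¹ → H_Q × A¹` and `Ψ : H_Q × A¹ → H_P × A¹` given by
`(x, y, z, w) ↦ (x, Q(A(z)+x_0^m w)/x_0^n, A(z)+x_0^m w, (z - B(A(z)+x_0^m w))/x_0^m)`
(resp. with `P, A` and `Q, B` interchanged) are well-defined inverse isomorphisms;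
equivalently, there is an `S`-algebra isomorphism `e` of the coordinate rings (the
pull-back along `Φ`, with inverse the pull-back along `Ψ`) acting on the coordinate
functions `y, z, w` by the above formulas. -/
theorem stmt6 (k : Type) [Field k] (s m n : ℕ) (P Q A B : Polynomial (SRing k s))
    (hAB : Polynomial.C (x₀ k s ^ m) ∣ (Polynomial.X - A.comp B))
    (hBA : Polynomial.C (x₀ k s ^ m) ∣ (Polynomial.X - B.comp A))
    (hQmem : ∃ α β : RRing k s,
      evalZ Q (evalZ A (vz k s) + MvPolynomial.C (x₀ k s ^ m) * vw k s)
        = MvPolynomial.C (x₀ k s ^ n) * α + evalZ P (vz k s) * β)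
    (hPmem : ∃ α β : RRing k s,
      evalZ P (evalZ B (vz k s) + MvPolynomial.C (x₀ k s ^ m) * vw k s)
        = MvPolynomial.C (x₀ k s ^ n) * α + evalZ Q (vz k s) * β) :
    ∃ e : (RRing k s ⧸ coneIdeal n Q) ≃ₐ[SRing k s] (RRing k s ⧸ coneIdeal n P),
      -- `Φ` pulls the coordinate `z` back to `A(z) + x_0^m w`:
      e (Ideal.Quotient.mk _ (vz k s))
          = Ideal.Quotient.mk _ (evalZ A (vz k s) + MvPolynomial.C (x₀ k s ^ m) * vw k s) ∧
      -- `Φ` pulls `y` back to `Q(A(z) + x_0^m w) / x_0^n`: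
      Ideal.Quotient.mk (coneIdeal n P) (MvPolynomial.C (x₀ k s ^ n)) * e (Ideal.Quotient.mk _ (vy k s))
          = Ideal.Quotient.mk _
              (evalZ Q (evalZ A (vz k s) + MvPolynomial.C (x₀ k s ^ m) * vw k s)) ∧
      -- `Φ` pulls `w` back to `(z - B(A(z) + x_0^m w)) / x_0^m`:
      Ideal.Quotient.mk (coneIdeal n P) (MvPolynomial.C (x₀ k s ^ m)) * e (Ideal.Quotient.mk _ (vw k s))
          = Ideal.Quotient.mk _
              (vz k s - evalZ B (evalZ A (vz k s) + MvPolynomial.C (x₀ k s ^ m) * vw k s)) ∧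
      -- the inverse `Ψ` pulls `z` back to `B(z) + x_0^m w`:
      e.symm (Ideal.Quotient.mk _ (vz k s))
          = Ideal.Quotient.mk _ (evalZ B (vz k s) + MvPolynomial.C (x₀ k s ^ m) * vw k s) ∧
      -- `Ψ` pulls `y` back to `P(B(z) + x_0^m w) / x_0^n`:
      Ideal.Quotient.mk (coneIdeal n Q) (MvPolynomial.C (x₀ k s ^ n)) * e.symm (Ideal.Quotient.mk _ (vy k s))
          = Ideal.Quotient.mk _
              (evalZ P (evalZ B (vz k s) + MvPolynomial.C (x₀ k s ^ m) * vw k s)) ∧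
      -- `Ψ` pulls `w` back to `(z - A(B(z) + x_0^m w)) / x_0^m`:
      Ideal.Quotient.mk (coneIdeal n Q) (MvPolynomial.C (x₀ k s ^ m)) * e.symm (Ideal.Quotient.mk _ (vw k s))
          = Ideal.Quotient.mk _
              (vz k s - evalZ A (evalZ B (vz k s) + MvPolynomial.C (x₀ k s ^ m) * vw k s)) := by
  classical
  obtain ⟨α1, β1, hQm⟩ := hQmem
  obtain ⟨α2, β2, hPm⟩ := hPmem
  simp only [evalZ_aeval] at hQm hPm ⊢
  obtain ⟨Az, hAz⟩ : ∃ t : RRing k s,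
      t = Polynomial.aeval (vz k s) A + MvPolynomial.C (x₀ k s ^ m) * vw k s := ⟨_, rfl⟩
  obtain ⟨Bz, hBz⟩ : ∃ t : RRing k s,
      t = Polynomial.aeval (vz k s) B + MvPolynomial.C (x₀ k s ^ m) * vw k s := ⟨_, rfl⟩
  rw [← hAz] at hQm ⊢
  rw [← hBz] at hPm ⊢
  -- divided differences in the `w`-direction
  obtain ⟨W₁, hW1⟩ : ∃ t : RRing k s,
      MvPolynomial.C (x₀ k s ^ m) * t = vz k s - Polynomial.aeval Az B := by
    obtain ⟨gB0, hgB0⟩ := hBA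
    have hBAz : vz k s - Polynomial.aeval (Polynomial.aeval (vz k s) A) B
        = MvPolynomial.C (x₀ k s ^ m) * Polynomial.aeval (vz k s) gB0 := by
      have h := congrArg (Polynomial.aeval (vz k s)) hgB0
      simpa [Polynomial.aeval_comp, MvPolynomial.algebraMap_eq] using h
    obtain ⟨e0, he0⟩ := (dvd_mul_right (MvPolynomial.C (x₀ k s ^ m) : RRing k s)
        (vw k s)).trans (hsub B (Polynomial.aeval (vz k s) A)
          (MvPolynomial.C (x₀ k s ^ m) * vw k s))
    refine ⟨Polynomial.aeval (vz k s) gB0 - e0, ?_⟩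
    rw [hAz]
    linear_combination he0 - hBAz
  obtain ⟨W₂, hW2⟩ : ∃ t : RRing k s,
      MvPolynomial.C (x₀ k s ^ m) * t = vz k s - Polynomial.aeval Bz A := by
    obtain ⟨gA0, hgA0⟩ := hAB
    have hABz : vz k s - Polynomial.aeval (Polynomial.aeval (vz k s) B) A
        = MvPolynomial.C (x₀ k s ^ m) * Polynomial.aeval (vz k s) gA0 := by
      have h := congrArg (Polynomial.aeval (vz k s)) hgA0
      simpa [Polynomial.aeval_comp, MvPolynomial.algebraMap_eq] using h
    obtain ⟨e0, he0⟩ := (dvd_mul_right (MvPolynomial.C (x₀ k s ^ m) : RRing k s)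
        (vw k s)).trans (hsub A (Polynomial.aeval (vz k s) B)
          (MvPolynomial.C (x₀ k s ^ m) * vw k s))
    refine ⟨Polynomial.aeval (vz k s) gA0 - e0, ?_⟩
    rw [hBz]
    linear_combination he0 - hABz
  -- basic nonvanishing facts
  have hx0 : (x₀ k s) ≠ 0 := MvPolynomial.X_ne_zero 0
  have hCm : (MvPolynomial.C (x₀ k s ^ m) : RRing k s) ≠ 0 := by
    intro h
    exact pow_ne_zero m hx0 (MvPolynomial.C_eq_zero.mp h)
  have hCx : (MvPolynomial.C (x₀ k s) : RRing k s) ≠ 0 := by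
    intro h
    exact hx0 (MvPolynomial.C_eq_zero.mp h)
  have hCn' : (MvPolynomial.C (x₀ k s) : RRing k s) ^ n ≠ 0 := pow_ne_zero n hCx
  have hCpow : (MvPolynomial.C (x₀ k s ^ n) : RRing k s) = MvPolynomial.C (x₀ k s) ^ n :=
    map_pow _ _ _
  -- the projection π := subst 0 vz vw  (sends y to 0)
  have hππ : (subst (0 : RRing k s) (vz k s) (vw k s)).comp (subst 0 (vz k s) (vw k s))
      = subst 0 (vz k s) (vw k s) := by
    apply ext3 <;> simp
  have hfixAz : subst (0 : RRing k s) (vz k s) (vw k s) Az = Az := by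
    rw [hAz, map_add, map_mul, hom_aeval, homC, subst_vz, subst_vw]
  have hfixBz : subst (0 : RRing k s) (vz k s) (vw k s) Bz = Bz := by
    rw [hBz, map_add, map_mul, hom_aeval, homC, subst_vz, subst_vw]
  have hfixW1 : subst (0 : RRing k s) (vz k s) (vw k s) W₁ = W₁ := by
    apply mul_left_cancel₀ hCm
    have h := congrArg (subst (0 : RRing k s) (vz k s) (vw k s)) hW1
    rw [map_mul, homC] at h
    rw [h, map_sub, hom_aeval, subst_vz, hfixAz, ← hW1]
  have hfixW2 : subst (0 : RRing k s) (vz k s) (vw k s) W₂ = W₂ := by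
    apply mul_left_cancel₀ hCm
    have h := congrArg (subst (0 : RRing k s) (vz k s) (vw k s)) hW2
    rw [map_mul, homC] at h
    rw [h, map_sub, hom_aeval, subst_vz, hfixBz, ← hW2]
  have hfixf : subst (0 : RRing k s) (vz k s) (vw k s) (Polynomial.aeval Az Q)
      = Polynomial.aeval Az Q := by rw [hom_aeval, hfixAz]
  have hfixg : subst (0 : RRing k s) (vz k s) (vw k s) (Polynomial.aeval (vz k s) P)
      = Polynomial.aeval (vz k s) P := by rw [hom_aeval, subst_vz]
  -- the substitutions σ₀ := subst vy Az W₁ and τ₀ := subst vy Bz W₂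
  have hσBz : subst (vy k s) Az W₁ Bz = vz k s := by
    rw [hBz, map_add, map_mul, hom_aeval, homC, subst_vz, subst_vw]
    linear_combination hW1
  have hτAz : subst (vy k s) Bz W₂ Az = vz k s := by
    rw [hAz, map_add, map_mul, hom_aeval, homC, subst_vz, subst_vw]
    linear_combination hW2
  have hτW1 : subst (vy k s) Bz W₂ W₁ = vw k s := by
    apply mul_left_cancel₀ hCm
    have h := congrArg (subst (vy k s) Bz W₂) hW1
    rw [map_mul, homC, map_sub, subst_vz, hom_aeval, hτAz] at h
    rw [h, hBz]
    ring
  have hσW2 : subst (vy k s) Az W₁ W₂ = vw k s := by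
    apply mul_left_cancel₀ hCm
    have h := congrArg (subst (vy k s) Az W₁) hW2
    rw [map_mul, homC, map_sub, subst_vz, hom_aeval, hσBz] at h
    rw [h, hAz]
    ring
  have hστ : (subst (vy k s) Az W₁).comp (subst (vy k s) Bz W₂)
      = AlgHom.id (SRing k s) (RRing k s) := by
    apply ext3
    · simp
    · rw [AlgHom.comp_apply, subst_vz, hσBz, AlgHom.id_apply]
    · rw [AlgHom.comp_apply, subst_vw, hσW2, AlgHom.id_apply]
  -- π-ified version of hQm
  obtain ⟨α₀, β₀, hQ2, hfixα₀, hfixβ₀⟩ :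
      ∃ a b : RRing k s, Polynomial.aeval Az Q = MvPolynomial.C (x₀ k s) ^ n * a
        + Polynomial.aeval (vz k s) P * b ∧ subst 0 (vz k s) (vw k s) a = a
        ∧ subst 0 (vz k s) (vw k s) b = b := by
    refine ⟨subst 0 (vz k s) (vw k s) α1, subst 0 (vz k s) (vw k s) β1, ?_,
      AlgHom.congr_fun hππ α1, AlgHom.congr_fun hππ β1⟩
    have h := congrArg (subst (0 : RRing k s) (vz k s) (vw k s)) hQm
    rwa [map_add, map_mul, map_mul, homC, hfixf, hfixg, hCpow] at h
  -- transport of hPm through σ₀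
  have hP2 : Polynomial.aeval (vz k s) P
      = MvPolynomial.C (x₀ k s) ^ n * (subst (vy k s) Az W₁ α2)
        + Polynomial.aeval Az Q * (subst (vy k s) Az W₁ β2) := by
    have h := congrArg (subst (vy k s) Az W₁) hPm
    rwa [map_add, map_mul, map_mul, homC, hom_aeval, hom_aeval, hσBz, subst_vz, hCpow] at h
  obtain ⟨b0, g0, a0, a0', h0, f1, f2, f3⟩ := core (x := MvPolynomial.C (x₀ k s)) prime_x0C n hQ2 hP2
  -- π-ify the corrected cofactors
  obtain ⟨bb, gg, aa, aa', hh, e1, e2, e3, fb, fg, fa, fa'⟩ :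
      ∃ bb gg aa aa' hh : RRing k s,
        (Polynomial.aeval Az Q - Polynomial.aeval (vz k s) P * bb
          = MvPolynomial.C (x₀ k s) ^ n * aa)
        ∧ (Polynomial.aeval (vz k s) P - Polynomial.aeval Az Q * gg
          = MvPolynomial.C (x₀ k s) ^ n * aa')
        ∧ (bb * gg = 1 + MvPolynomial.C (x₀ k s) ^ n * hh)
        ∧ subst 0 (vz k s) (vw k s) bb = bb
        ∧ subst 0 (vz k s) (vw k s) gg = gg
        ∧ subst 0 (vz k s) (vw k s) aa = aa
        ∧ subst 0 (vz k s) (vw k s) aa' = aa' := by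
    refine ⟨subst 0 (vz k s) (vw k s) b0, subst 0 (vz k s) (vw k s) g0,
      subst 0 (vz k s) (vw k s) a0, subst 0 (vz k s) (vw k s) a0',
      subst 0 (vz k s) (vw k s) h0, ?_, ?_, ?_,
      AlgHom.congr_fun hππ b0, AlgHom.congr_fun hππ g0,
      AlgHom.congr_fun hππ a0, AlgHom.congr_fun hππ a0'⟩
    · have h := congrArg (subst (0 : RRing k s) (vz k s) (vw k s)) f1
      rwa [map_sub, map_mul, map_mul, map_pow, homC, hfixf, hfixg] at h
    · have h := congrArg (subst (0 : RRing k s) (vz k s) (vw k s)) f2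
      rwa [map_sub, map_mul, map_mul, map_pow, homC, hfixf, hfixg] at h
    · have h := congrArg (subst (0 : RRing k s) (vz k s) (vw k s)) f3
      rwa [map_mul, map_add, map_one, map_mul, map_pow, homC] at h
  -- the affine maps μ, ν in the y-coordinate
  have hμπ : (subst (bb * vy k s + aa) (vz k s) (vw k s)).comp
      (subst (0 : RRing k s) (vz k s) (vw k s)) = subst 0 (vz k s) (vw k s) := by
    apply ext3 <;> simp
  have hνπ : (subst (gg * vy k s + aa') (vz k s) (vw k s)).comp
      (subst (0 : RRing k s) (vz k s) (vw k s)) = subst 0 (vz k s) (vw k s) := by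
    apply ext3 <;> simp
  have hμfix : ∀ t : RRing k s, subst 0 (vz k s) (vw k s) t = t →
      subst (bb * vy k s + aa) (vz k s) (vw k s) t = t := by
    intro t ht
    conv_lhs => rw [← ht]
    rw [← AlgHom.comp_apply, hμπ, ht]
  have hνfix : ∀ t : RRing k s, subst 0 (vz k s) (vw k s) t = t →
      subst (gg * vy k s + aa') (vz k s) (vw k s) t = t := by
    intro t ht
    conv_lhs => rw [← ht]
    rw [← AlgHom.comp_apply, hνπ, ht]
  have hμAz := hμfix Az hfixAz
  have hνAz := hνfix Az hfixAz
  have hμW1 := hμfix W₁ hfixW1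
  have hνW1 := hνfix W₁ hfixW1
  have hμf := hμfix _ hfixf
  have hνg := hνfix _ hfixg
  have hνbb := hνfix bb fb
  have hνaa := hνfix aa fa
  have hμgg := hμfix gg fg
  have hμaa' := hμfix aa' fa'
  -- auxiliary exact identities
  have haux1 : bb * aa' + aa = -(hh * Polynomial.aeval Az Q) := by
    apply mul_left_cancel₀ hCn'
    linear_combination (-bb) * e2 - e1 - Polynomial.aeval Az Q * e3
  have haux2 : gg * aa + aa' = -(hh * Polynomial.aeval (vz k s) P) := by
    apply mul_left_cancel₀ hCn'
    linear_combination (-gg) * e1 - e2 - Polynomial.aeval (vz k s) P * e3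
  have hν1 : bb * (gg * vy k s + aa') + aa
      = vy k s + hh * (MvPolynomial.C (x₀ k s) ^ n * vy k s - Polynomial.aeval Az Q) := by
    linear_combination vy k s * e3 + haux1
  have hμ1 : gg * (bb * vy k s + aa) + aa'
      = vy k s + hh * (MvPolynomial.C (x₀ k s) ^ n * vy k s
          - Polynomial.aeval (vz k s) P) := by
    linear_combination vy k s * e3 + haux2
  have hτe2 := congrArg (subst (vy k s) Bz W₂) e2
  simp only [map_sub, map_mul, map_pow, homC, hom_aeval, subst_vz, hτAz] at hτe2
  have hstgg : subst (vy k s) Az W₁ (subst (vy k s) Bz W₂ gg) = gg :=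
    AlgHom.congr_fun hστ gg
  have hstaa' : subst (vy k s) Az W₁ (subst (vy k s) Bz W₂ aa') = aa' :=
    AlgHom.congr_fun hστ aa'
  -- the two composite substitutions
  obtain ⟨σh, hσh⟩ : ∃ F : RRing k s →ₐ[SRing k s] RRing k s,
      F = (subst (bb * vy k s + aa) (vz k s) (vw k s)).comp (subst (vy k s) Az W₁) :=
    ⟨_, rfl⟩
  obtain ⟨τh, hτh⟩ : ∃ F : RRing k s →ₐ[SRing k s] RRing k s,
      F = (subst (vy k s) Bz W₂).comp (subst (gg * vy k s + aa') (vz k s) (vw k s)) :=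
    ⟨_, rfl⟩
  have hσy : σh (vy k s) = bb * vy k s + aa := by
    rw [hσh, AlgHom.comp_apply, subst_vy, subst_vy]
  have hσz : σh (vz k s) = Az := by
    rw [hσh, AlgHom.comp_apply, subst_vz, hμAz]
  have hσw : σh (vw k s) = W₁ := by
    rw [hσh, AlgHom.comp_apply, subst_vw, hμW1]
  have hτy : τh (vy k s) = subst (vy k s) Bz W₂ gg * vy k s
      + subst (vy k s) Bz W₂ aa' := by
    rw [hτh, AlgHom.comp_apply, subst_vy, map_add, map_mul, subst_vy]
  have hτz : τh (vz k s) = Bz := by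
    rw [hτh, AlgHom.comp_apply, subst_vz, subst_vz]
  have hτw : τh (vw k s) = W₂ := by
    rw [hτh, AlgHom.comp_apply, subst_vw, subst_vw]
  -- quotient-descent conditions
  have hle1 : coneIdeal n Q ≤ (coneIdeal n P).comap σh := by
    simp only [coneIdeal, Ideal.span_le, Set.singleton_subset_iff, SetLike.mem_coe,
      Ideal.mem_comap, Ideal.mem_span_singleton]
    refine ⟨bb, ?_⟩
    simp only [evalZ_aeval, map_sub, map_mul, map_pow, homC, hσy, hσz, hom_aeval, hCpow]
    linear_combination -e1
  have hle2 : coneIdeal n P ≤ (coneIdeal n Q).comap τh := by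
    simp only [coneIdeal, Ideal.span_le, Set.singleton_subset_iff, SetLike.mem_coe,
      Ideal.mem_comap, Ideal.mem_span_singleton]
    refine ⟨subst (vy k s) Bz W₂ gg, ?_⟩
    simp only [evalZ_aeval, map_sub, map_mul, map_pow, homC, hτy, hτz, hom_aeval, hCpow]
    linear_combination -hτe2
  -- the composites are the identity on the quotients
  have hts : (Ideal.Quotient.mkₐ (SRing k s) (coneIdeal n Q)).comp (τh.comp σh)
      = Ideal.Quotient.mkₐ (SRing k s) (coneIdeal n Q) := by
    apply ext3
    · simp only [AlgHom.comp_apply, Ideal.Quotient.mkₐ_eq_mk]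
      have hτ1 : subst (vy k s) Bz W₂ (vy k s + hh * (MvPolynomial.C (x₀ k s) ^ n * vy k s
          - Polynomial.aeval Az Q)) = vy k s + subst (vy k s) Bz W₂ hh *
            (MvPolynomial.C (x₀ k s) ^ n * vy k s - Polynomial.aeval (vz k s) Q) := by
        simp only [map_add, map_mul, map_sub, map_pow, homC, subst_vy, hom_aeval, hτAz]
      rw [hσy, hτh, AlgHom.comp_apply, map_add, map_mul, hνbb, subst_vy, hνaa, hν1, hτ1]
      rw [Ideal.Quotient.eq]
      simp only [coneIdeal, evalZ_aeval, hCpow, Ideal.mem_span_singleton]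
      exact ⟨subst (vy k s) Bz W₂ hh, by ring⟩
    · simp only [AlgHom.comp_apply, Ideal.Quotient.mkₐ_eq_mk]
      rw [hσz, hτh, AlgHom.comp_apply, hνAz, hτAz]
    · simp only [AlgHom.comp_apply, Ideal.Quotient.mkₐ_eq_mk]
      rw [hσw, hτh, AlgHom.comp_apply, hνW1, hτW1]
  have hst : (Ideal.Quotient.mkₐ (SRing k s) (coneIdeal n P)).comp (σh.comp τh)
      = Ideal.Quotient.mkₐ (SRing k s) (coneIdeal n P) := by
    apply ext3
    · simp only [AlgHom.comp_apply, Ideal.Quotient.mkₐ_eq_mk]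
      rw [hτy, hσh, AlgHom.comp_apply, map_add, map_mul, hstgg, subst_vy, hstaa']
      rw [map_add, map_mul, hμgg, subst_vy, hμaa', hμ1]
      rw [Ideal.Quotient.eq]
      simp only [coneIdeal, evalZ_aeval, hCpow, Ideal.mem_span_singleton]
      exact ⟨hh, by ring⟩
    · simp only [AlgHom.comp_apply, Ideal.Quotient.mkₐ_eq_mk]
      rw [hτz, hσh, AlgHom.comp_apply, hσBz, subst_vz]
    · simp only [AlgHom.comp_apply, Ideal.Quotient.mkₐ_eq_mk]
      rw [hτw, hσh, AlgHom.comp_apply, hσW2, subst_vw]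
  obtain ⟨e, he, hes⟩ := assemble σh τh hle1 hle2 hts hst
  refine ⟨e, ?_, ?_, ?_, ?_, ?_, ?_⟩
  · rw [he, hσz]
  · rw [he, hσy, ← map_mul, Ideal.Quotient.eq]
    simp only [coneIdeal, evalZ_aeval, hCpow, Ideal.mem_span_singleton]
    exact ⟨bb, by linear_combination -e1⟩
  · rw [he, hσw, ← map_mul, hW1]
  · rw [hes, hτz]
  · rw [hes, hτy, ← map_mul, Ideal.Quotient.eq]
    simp only [coneIdeal, evalZ_aeval, hCpow, Ideal.mem_span_singleton]
    refine ⟨subst (vy k s) Bz W₂ gg, ?_⟩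
    linear_combination -hτe2
  · rw [hes, hτw, ← map_mul, hW2]

end
end

section
/- Let n ≥ 1 be an integer and let H ⊆ P^n be a hypersurface of degree d ≥ 1 over a field k. Then the set M = {p ∈ H | mult_p(H) = d} of points of H of multiplicity d is either empty or a linear subspace of P^n. -/
/-!
Set-up for Lemma 3.6.  We work with the `k`-rational points of `ℙⁿ`, realized as
`Projectivization k (Fin (n+1) → k)`.  For a point `p`, `pointIdeal p` is the ideal of
`k[x_0, …, x_n]` generated by the linear forms vanishing at `p`.  For a hypersurface
`H = V(f)` of degree `d`, a point `p ∈ H` has multiplicity `mult_p(H) = d` (the maximal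
possible value, cf. the multiplicity of the maximal ideal of the local ring `O_{H,p}`)
exactly when `f` lies in the `d`-th power of `pointIdeal p`.
-/

open MvPolynomial

noncomputable section

/-- The ideal of `k[x_0, …, x_n]` generated by all linear forms vanishing at the
point `p ∈ ℙⁿ(k)`. -/
def pointIdeal {k : Type} [Field k] {n : ℕ} (p : Projectivization k (Fin (n + 1) → k)) :
    Ideal (MvPolynomial (Fin (n + 1)) k) :=
  Ideal.span {L | ∃ c : Fin (n + 1) → k,
    (∑ i, c i * p.rep i) = 0 ∧ L = ∑ i, MvPolynomial.C (c i) * MvPolynomial.X i}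

/-- The set `M = {p ∈ H ∣ mult_p(H) = d}` of points of maximal multiplicity `d` of the
hypersurface `H = V(f)` of degree `d`: the points `p` with `f ∈ (pointIdeal p)^d`
(such `p` automatically lie on `H`). -/
def maxMultSet {k : Type} [Field k] {n : ℕ} (d : ℕ) (f : MvPolynomial (Fin (n + 1)) k) :
    Set (Projectivization k (Fin (n + 1) → k)) :=
  {p | f ∈ (pointIdeal p) ^ d}

namespace Stmt9Aux

variable {k : Type} [Field k] {n : ℕ}


variable {k : Type} [Field k] {n : ℕ}

/-- Ideal of linear forms vanishing at the vector `v`. -/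
def vIdeal (v : Fin (n + 1) → k) : Ideal (MvPolynomial (Fin (n + 1)) k) :=
  Ideal.span {L | ∃ c : Fin (n + 1) → k,
    (∑ i, c i * v i) = 0 ∧ L = ∑ i, MvPolynomial.C (c i) * MvPolynomial.X i}

/-- `f` avoids the variable `i0`. -/
def NoVar (i0 : Fin (n + 1)) (f : MvPolynomial (Fin (n + 1)) k) : Prop :=
  ∀ m ∈ f.support, m i0 = 0

lemma monomial_mem_pow (J : Ideal (MvPolynomial (Fin (n + 1)) k)) (m : Fin (n + 1) →₀ ℕ)
    (a : k) (hX : ∀ j ∈ m.support, X j ∈ J) :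
    monomial m a ∈ J ^ (∑ j ∈ m.support, m j) := by
  rw [monomial_eq]
  have h1 : (m.prod fun j e => (X j : MvPolynomial (Fin (n+1)) k) ^ e)
      ∈ ∏ j ∈ m.support, J ^ (m j) := by
    refine Ideal.prod_mem_prod ?_
    intro j hj
    exact Ideal.pow_mem_pow (hX j hj) _
  rw [Finset.prod_pow_eq_pow_sum] at h1
  exact Ideal.mul_mem_left _ _ h1

lemma homog_degree {f : MvPolynomial (Fin (n + 1)) k} {d : ℕ} (hfd : f.IsHomogeneous d)
    {m : Fin (n + 1) →₀ ℕ} (hm : m ∈ f.support) : (∑ j ∈ m.support, m j) = d := by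
  have := hfd (mem_support_iff.mp hm)
  rw [← this, Finsupp.weight_apply, Finsupp.sum]
  simp

lemma homog_mem_pow {f : MvPolynomial (Fin (n + 1)) k} {d : ℕ} (hfd : f.IsHomogeneous d)
    (J : Ideal (MvPolynomial (Fin (n + 1)) k))
    (hX : ∀ m ∈ f.support, ∀ j ∈ m.support, X j ∈ J) : f ∈ J ^ d := by
  rw [f.as_sum]
  refine Ideal.sum_mem _ ?_
  intro m hm
  have := monomial_mem_pow J m (coeff m f) (hX m hm)
  rwa [homog_degree hfd hm] at this



/-- the `i0`-th standard basis vector -/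
def evec (i0 : Fin (n + 1)) : Fin (n + 1) → k := fun i => if i = i0 then 1 else 0

lemma sum_mul_evec (i0 : Fin (n + 1)) (c : Fin (n + 1) → k) :
    (∑ i, c i * evec i0 i) = c i0 := by
  simp [evec, mul_ite]

lemma vIdeal_evec (i0 : Fin (n + 1)) :
    vIdeal (evec i0 : Fin (n+1) → k) =
      Ideal.span {g | ∃ j, j ≠ i0 ∧ g = (X j : MvPolynomial (Fin (n + 1)) k)} := by
  apply le_antisymm
  · rw [vIdeal, Ideal.span_le]
    rintro L ⟨c, hc, rfl⟩
    rw [sum_mul_evec] at hc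
    refine Ideal.sum_mem _ ?_
    intro i _
    by_cases hi : i = i0
    · subst hi
      rw [hc]
      simp
    · exact Ideal.mul_mem_left _ _ (Ideal.subset_span ⟨i, hi, rfl⟩)
  · rw [Ideal.span_le]
    rintro g ⟨j, hj, rfl⟩
    refine Ideal.subset_span ⟨fun i => if i = j then 1 else 0, ?_, ?_⟩
    · simp [evec, sum_mul_evec, Ne.symm hj]
    · rw [Finset.sum_eq_single j]
      · simp
      · intro i _ hij; simp [hij]
      · intro h; exact absurd (Finset.mem_univ j) h

/-- the weight of a monomial ignoring `i0` -/
def wt (i0 : Fin (n + 1)) (m : Fin (n + 1) →₀ ℕ) : ℕ :=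
  m.sum fun j e => if j = i0 then 0 else e

lemma wt_add (i0 : Fin (n + 1)) (m₁ m₂ : Fin (n + 1) →₀ ℕ) :
    wt i0 (m₁ + m₂) = wt i0 m₁ + wt i0 m₂ := by
  unfold wt
  rw [Finsupp.sum_add_index]
  · intro j _; simp
  · intro j _ e₁ e₂; by_cases h : j = i0 <;> simp [h]

def Wge (i0 : Fin (n + 1)) (d : ℕ) (h : MvPolynomial (Fin (n + 1)) k) : Prop :=
  ∀ m ∈ h.support, d ≤ wt i0 m

lemma Wge_zero (i0 : Fin (n + 1)) (d : ℕ) : Wge i0 d (0 : MvPolynomial (Fin (n + 1)) k) := by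
  intro m hm; simp at hm

lemma Wge_add {i0 : Fin (n + 1)} {d : ℕ} {g h : MvPolynomial (Fin (n + 1)) k}
    (hg : Wge i0 d g) (hh : Wge i0 d h) : Wge i0 d (g + h) := by
  intro m hm
  classical
  rcases Finset.mem_union.mp (MvPolynomial.support_add hm) with h' | h'
  · exact hg m h'
  · exact hh m h'

lemma Wge_mul {i0 : Fin (n + 1)} {a b : ℕ} {g h : MvPolynomial (Fin (n + 1)) k}
    (hg : Wge i0 a g) (hh : Wge i0 b h) : Wge i0 (a + b) (g * h) := by
  intro m hm
  classical
  obtain ⟨m₁, hm₁, m₂, hm₂, rfl⟩ := Finset.mem_add.mp (MvPolynomial.support_mul g h hm)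
  rw [wt_add]
  exact Nat.add_le_add (hg m₁ hm₁) (hh m₂ hm₂)

lemma Wge_mul_left {i0 : Fin (n + 1)} {d : ℕ} {r h : MvPolynomial (Fin (n + 1)) k}
    (hh : Wge i0 d h) : Wge i0 d (r * h) := by
  have := Wge_mul (a := 0) (b := d) (g := r) (fun m _ => Nat.zero_le _) hh
  simpa using this

lemma Wge_one_of_mem {i0 : Fin (n + 1)}
    {g : MvPolynomial (Fin (n + 1)) k}
    (hg : g ∈ Ideal.span {g | ∃ j, j ≠ i0 ∧ g = (X j : MvPolynomial (Fin (n + 1)) k)}) :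
    Wge i0 1 g := by
  refine Submodule.span_induction ?_ (Wge_zero i0 1) (fun x y _ _ hx hy => Wge_add hx hy)
    (fun r x _ hx => by simpa [smul_eq_mul] using Wge_mul_left hx) hg
  rintro g ⟨j, hj, rfl⟩
  intro m hm
  rw [MvPolynomial.support_X, Finset.mem_singleton] at hm
  subst hm
  rw [wt, Finsupp.sum_single_index] <;> simp [hj]

lemma Wge_pow {i0 : Fin (n + 1)} (d : ℕ)
    {h : MvPolynomial (Fin (n + 1)) k}
    (hh : h ∈ (Ideal.span {g | ∃ j, j ≠ i0 ∧ g = (X j : MvPolynomial (Fin (n + 1)) k)}) ^ d) :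
    Wge i0 d h := by
  induction d generalizing h with
  | zero => intro m _; exact Nat.zero_le _
  | succ d ih =>
    rw [pow_succ] at hh
    refine Submodule.mul_induction_on hh ?_ (fun x y hx hy => Wge_add hx hy)
    intro g hg r hr
    have : Wge i0 (d + 1) (g * r) := by
      have := Wge_mul (ih hg) (Wge_one_of_mem hr)
      simpa using this
    exact this



lemma wt_add_apply (i0 : Fin (n + 1)) (m : Fin (n + 1) →₀ ℕ) :
    wt i0 m + m i0 = ∑ j ∈ m.support, m j := by
  classical
  have h1 : m i0 = ∑ j ∈ m.support, if j = i0 then m j else 0 := by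
    rw [Finset.sum_ite_eq' m.support i0 m]
    by_cases h : i0 ∈ m.support
    · simp [h]
    · simp [h, Finsupp.notMem_support_iff.mp h]
  rw [h1, wt, Finsupp.sum, ← Finset.sum_add_distrib]
  refine Finset.sum_congr rfl ?_
  intro j _
  by_cases h : j = i0 <;> simp [h]



/-- formal translation by `t•v` -/
def tr (v : Fin (n + 1) → k) :
    MvPolynomial (Fin (n + 1)) k →+* MvPolynomial (Fin (n + 1)) (Polynomial k) :=
  eval₂Hom ((MvPolynomial.C).comp Polynomial.C)
    (fun i => X i + C (Polynomial.X * Polynomial.C (v i)))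

def iot : MvPolynomial (Fin (n + 1)) k →+* MvPolynomial (Fin (n + 1)) (Polynomial k) :=
  MvPolynomial.map (Polynomial.C)

@[simp] lemma tr_C (v : Fin (n + 1) → k) (a : k) :
    tr v (MvPolynomial.C a) = MvPolynomial.C (Polynomial.C a) := by simp [tr]

@[simp] lemma tr_X (v : Fin (n + 1) → k) (i : Fin (n + 1)) :
    tr v (X i) = X i + C (Polynomial.X * Polynomial.C (v i)) := by simp [tr]

@[simp] lemma iot_C (a : k) :
    (iot : MvPolynomial (Fin (n+1)) k →+* _) (MvPolynomial.C a)
      = MvPolynomial.C (Polynomial.C a) := by simp [iot]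

@[simp] lemma iot_X (i : Fin (n + 1)) :
    (iot : MvPolynomial (Fin (n+1)) k →+* _) (X i) = X i := by simp [iot]

def z0 (k : Type) [Field k] {n : ℕ} (i0 : Fin (n + 1)) :
    Fin (n + 1) → MvPolynomial (Fin (n + 1)) k :=
  fun j => if j = i0 then 0 else X j

lemma aeval_z0_monomial (i0 : Fin (n + 1)) (m : Fin (n + 1) →₀ ℕ) (a : k) :
    aeval (z0 k i0) (monomial m a) = if m i0 = 0 then monomial m a else 0 := by
  rw [aeval_monomial]
  by_cases h : m i0 = 0
  · rw [if_pos h]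
    have : (m.prod fun j e => z0 k i0 j ^ e) = m.prod fun j e => (X j : MvPolynomial (Fin (n+1)) k) ^ e := by
      refine Finset.prod_congr rfl ?_
      intro j hj
      have : j ≠ i0 := by
        rintro rfl
        exact (Finsupp.mem_support_iff.mp hj) h
      simp [z0, this]
    rw [this, monomial_eq, algebraMap_eq]
  · rw [if_neg h]
    have : (m.prod fun j e => z0 k i0 j ^ e) = 0 := by
      refine Finset.prod_eq_zero (Finsupp.mem_support_iff.mpr h) ?_
      simp [z0, zero_pow h]
    rw [this, mul_zero]

lemma fix_iff_noVar (i0 : Fin (n + 1)) (f : MvPolynomial (Fin (n + 1)) k) :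
    aeval (z0 k i0) f = f ↔ NoVar i0 f := by
  constructor
  · intro h m hm
    by_contra hne
    have h0 : coeff m ((aeval (z0 k i0) : MvPolynomial (Fin (n+1)) k →ₐ[k] _) f) = 0 := by
      conv_lhs => rw [f.as_sum]
      rw [map_sum, coeff_sum]
      refine Finset.sum_eq_zero ?_
      intro m' hm'
      rw [aeval_z0_monomial]
      by_cases h' : m' i0 = 0
      · rw [if_pos h', coeff_monomial, if_neg]
        rintro rfl
        exact hne h'
      · rw [if_neg h', coeff_zero]
    rw [h] at h0
    exact (mem_support_iff.mp hm) h0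
  · intro h
    conv_lhs => rw [f.as_sum]
    rw [map_sum, Finset.sum_congr rfl
      (fun m hm => by rw [aeval_z0_monomial, if_pos (h m hm)]), ← f.as_sum]

def rho (i0 : Fin (n + 1)) :
    MvPolynomial (Fin (n + 1)) (Polynomial k) →+* MvPolynomial (Fin (n + 1)) k :=
  eval₂Hom (Polynomial.eval₂RingHom (MvPolynomial.C) (X i0)) (z0 k i0)

lemma rho_tr (i0 : Fin (n + 1)) :
    (rho i0).comp (tr (evec i0 : Fin (n+1) → k)) = RingHom.id _ := by
  apply MvPolynomial.ringHom_ext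
  · intro a; simp [rho]
  · intro i
    by_cases h : i = i0
    · subst h; simp [rho, z0, evec]
    · simp [rho, z0, evec, h]

lemma rho_iot (i0 : Fin (n + 1)) :
    (rho i0).comp (iot : MvPolynomial (Fin (n+1)) k →+* _)
      = (aeval (z0 k i0)).toRingHom := by
  apply MvPolynomial.ringHom_ext
  · intro a; simp [rho, z0]
  · intro i; simp [rho, z0]

lemma tr_evec_iff (i0 : Fin (n + 1)) (f : MvPolynomial (Fin (n + 1)) k) :
    tr (evec i0 : Fin (n+1) → k) f = iot f ↔ NoVar i0 f := by
  rw [← fix_iff_noVar i0]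
  constructor
  · intro h
    have h1 := RingHom.congr_fun (rho_tr i0) f
    have h2 := RingHom.congr_fun (rho_iot i0) f
    simp only [RingHom.comp_apply, RingHom.id_apply, AlgHom.toRingHom_eq_coe,
      RingHom.coe_coe] at h1 h2
    rw [h] at h1
    exact h2.symm.trans h1
  · intro h
    have key : (tr (evec i0 : Fin (n+1) → k)).comp
          (aeval (z0 k i0) : MvPolynomial (Fin (n+1)) k →ₐ[k] MvPolynomial (Fin (n+1)) k).toRingHom
        = iot.comp (aeval (z0 k i0) : MvPolynomial (Fin (n+1)) k →ₐ[k] MvPolynomial (Fin (n+1)) k).toRingHom := by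
      apply MvPolynomial.ringHom_ext
      · intro a; simp
      · intro i
        by_cases hi : i = i0
        · subst hi; simp [z0]
        · simp [z0, hi, evec]
    conv_lhs => rw [← h]
    conv_rhs => rw [← h]
    have := RingHom.congr_fun key f
    simpa using this


lemma mem_pow_evec_iff {f : MvPolynomial (Fin (n + 1)) k} {d : ℕ}
    (hfd : f.IsHomogeneous d) (i0 : Fin (n + 1)) :
    f ∈ vIdeal (evec i0 : Fin (n+1) → k) ^ d ↔ NoVar i0 f := by
  constructor
  · intro hf m hm
    have hw : d ≤ wt i0 m := Wge_pow d (by rwa [vIdeal_evec] at hf) m hm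
    have h2 := wt_add_apply i0 m
    rw [homog_degree hfd hm] at h2
    omega
  · intro h
    refine homog_mem_pow hfd _ ?_
    intro m hm j hj
    have hji : j ≠ i0 := by rintro rfl; exact (Finsupp.mem_support_iff.mp hj) (h m hm)
    rw [vIdeal_evec]
    exact Ideal.subset_span ⟨j, hji, rfl⟩

def Aop (i0 : Fin (n + 1)) (u : Fin (n + 1) → k) :
    MvPolynomial (Fin (n + 1)) k →+* MvPolynomial (Fin (n + 1)) k :=
  eval₂Hom MvPolynomial.C fun j => if j = i0 then X i0 else X j + C (u j) * X i0

def Bop (i0 : Fin (n + 1)) (u : Fin (n + 1) → k) :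
    MvPolynomial (Fin (n + 1)) k →+* MvPolynomial (Fin (n + 1)) k :=
  eval₂Hom MvPolynomial.C fun j => if j = i0 then X i0 else X j - C (u j) * X i0

lemma Bop_Aop (i0 : Fin (n + 1)) (u : Fin (n + 1) → k) :
    (Bop i0 u).comp (Aop i0 u) = RingHom.id _ := by
  apply MvPolynomial.ringHom_ext
  · intro a; simp [Aop, Bop]
  · intro i
    by_cases h : i = i0
    · subst h; simp [Aop, Bop]
    · simp [Aop, Bop, h]

lemma Aop_linear {i0 : Fin (n + 1)} {u : Fin (n + 1) → k} (hu : u i0 = 1)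
    (c : Fin (n + 1) → k) :
    Aop i0 u (∑ i, C (c i) * X i) =
      (∑ i, C (if i = i0 then 0 else c i) * X i) + C (∑ i, c i * u i) * X i0 := by
  rw [map_sum]
  have key : ∀ i ∈ Finset.univ, Aop i0 u (C (c i) * X i)
      = C (if i = i0 then 0 else c i) * X i + C (c i * u i) * X i0 := by
    intro i _
    by_cases h : i = i0
    · subst h
      simp [Aop, hu]
    · simp only [Aop, map_mul, eval₂Hom_C, eval₂Hom_X', if_neg h, map_mul]
      ring
  rw [Finset.sum_congr rfl key, Finset.sum_add_distrib]
  congr 1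
  rw [← Finset.sum_mul]
  congr 1
  exact (map_sum (C : k →+* MvPolynomial (Fin (n+1)) k) _ _).symm

lemma map_Aop_vIdeal {i0 : Fin (n + 1)} {u : Fin (n + 1) → k} (hu : u i0 = 1) :
    Ideal.map (Aop i0 u) (vIdeal u) = vIdeal (evec i0 : Fin (n+1) → k) := by
  rw [vIdeal, Ideal.map_span]
  apply le_antisymm
  · rw [Ideal.span_le]
    rintro L ⟨L', ⟨c, hc, rfl⟩, rfl⟩
    rw [Aop_linear hu c, hc]
    simp only [map_zero, zero_mul, add_zero]
    rw [vIdeal]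
    refine Ideal.subset_span ⟨fun i => if i = i0 then 0 else c i, ?_, rfl⟩
    rw [sum_mul_evec]
    simp
  · rw [vIdeal, Ideal.span_le]
    rintro L ⟨c, hc, rfl⟩
    rw [sum_mul_evec] at hc
    have hsum : (∑ i, (if i = i0 then -(∑ j, c j * u j) else c i) * u i) = 0 := by
      rw [← Finset.add_sum_erase _ _ (Finset.mem_univ i0), if_pos rfl, hu, mul_one]
      have e3 : ∑ i ∈ Finset.univ.erase i0, (if i = i0 then -(∑ j, c j * u j) else c i) * u i
          = ∑ i ∈ Finset.univ.erase i0, c i * u i :=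
        Finset.sum_congr rfl fun i hi => by rw [if_neg (Finset.ne_of_mem_erase hi)]
      have e2 := Finset.add_sum_erase Finset.univ (fun i => c i * u i) (Finset.mem_univ i0)
      simp only [hc, zero_mul, zero_add] at e2
      rw [e3, e2]
      ring
    have hrw : (∑ i, C (c i) * X i : MvPolynomial (Fin (n+1)) k)
        = Aop i0 u (∑ i, C ((if i = i0 then -(∑ j, c j * u j) else c i)) * X i) := by
      rw [Aop_linear hu _, hsum]
      simp only [map_zero, zero_mul, add_zero]
      refine (Finset.sum_congr rfl fun i _ => ?_).symm
      by_cases h : i = i0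
      · subst h; rw [if_pos rfl, hc]
      · rw [if_neg h, if_neg h]
    rw [hrw]
    exact Ideal.subset_span (Set.mem_image_of_mem _
      ⟨fun i => if i = i0 then -(∑ j, c j * u j) else c i, hsum, rfl⟩)

lemma mem_pow_Aop_iff {i0 : Fin (n + 1)} {u : Fin (n + 1) → k} (hu : u i0 = 1)
    {f : MvPolynomial (Fin (n + 1)) k} {d : ℕ} :
    f ∈ vIdeal u ^ d ↔ Aop i0 u f ∈ vIdeal (evec i0 : Fin (n+1) → k) ^ d := by
  constructor
  · intro hf
    have := Ideal.mem_map_of_mem (Aop i0 u) hf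
    rwa [Ideal.map_pow, map_Aop_vIdeal hu] at this
  · intro hf
    rw [← map_Aop_vIdeal hu, ← Ideal.map_pow] at hf
    have := Ideal.mem_map_of_mem (Bop i0 u) hf
    rw [Ideal.map_map, Bop_Aop, Ideal.map_id] at this
    rwa [← RingHom.comp_apply, Bop_Aop, RingHom.id_apply] at this

lemma Aop_isHomogeneous {i0 : Fin (n + 1)} {u : Fin (n + 1) → k}
    {f : MvPolynomial (Fin (n + 1)) k} {d : ℕ} (hfd : f.IsHomogeneous d) :
    (Aop i0 u f).IsHomogeneous d := by
  conv_lhs => rw [f.as_sum]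
  rw [map_sum]
  apply IsHomogeneous.sum
  intro m hm
  have hmon : Aop i0 u (monomial m (coeff m f)) = C (coeff m f) *
      ∏ j ∈ m.support,
        (if j = i0 then X i0 else X j + C (u j) * X i0 : MvPolynomial (Fin (n+1)) k) ^ m j := by
    rw [Aop, coe_eval₂Hom, eval₂_monomial]
    rfl
  rw [hmon]
  have h1 : ((∏ j ∈ m.support,
      (if j = i0 then X i0 else X j + C (u j) * X i0 : MvPolynomial (Fin (n+1)) k) ^ m j)).IsHomogeneous
      (∑ j ∈ m.support, m j) := by
    refine IsHomogeneous.prod m.support _ (fun j => m j) ?_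
    intro j _
    have hbase : ((if j = i0 then X i0 else X j + C (u j) * X i0 :
        MvPolynomial (Fin (n+1)) k)).IsHomogeneous 1 := by
      by_cases h : j = i0
      · rw [if_pos h]; exact isHomogeneous_X _ _
      · rw [if_neg h]
        refine (isHomogeneous_X _ _).add ?_
        have := (isHomogeneous_C (Fin (n+1)) (u j)).mul (isHomogeneous_X k i0)
        simpa using this
    simpa using hbase.pow (m j)
  rw [homog_degree hfd hm] at h1
  have := (isHomogeneous_C (Fin (n+1)) (coeff m f)).mul h1
  simpa using this


def Aop' (i0 : Fin (n + 1)) (u : Fin (n + 1) → k) :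
    MvPolynomial (Fin (n + 1)) (Polynomial k) →+* MvPolynomial (Fin (n + 1)) (Polynomial k) :=
  eval₂Hom MvPolynomial.C fun j =>
    if j = i0 then X i0 else X j + C (Polynomial.C (u j)) * X i0

def Bop' (i0 : Fin (n + 1)) (u : Fin (n + 1) → k) :
    MvPolynomial (Fin (n + 1)) (Polynomial k) →+* MvPolynomial (Fin (n + 1)) (Polynomial k) :=
  eval₂Hom MvPolynomial.C fun j =>
    if j = i0 then X i0 else X j - C (Polynomial.C (u j)) * X i0

lemma Bop'_Aop' (i0 : Fin (n + 1)) (u : Fin (n + 1) → k) :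
    (Bop' i0 u).comp (Aop' i0 u) = RingHom.id _ := by
  apply MvPolynomial.ringHom_ext
  · intro a; simp [Aop', Bop']
  · intro i
    by_cases h : i = i0
    · subst h; simp [Aop', Bop']
    · simp [Aop', Bop', h]

lemma Aop'_inj (i0 : Fin (n + 1)) (u : Fin (n + 1) → k) :
    Function.Injective (Aop' i0 u) := by
  intro x y h
  have hx := RingHom.congr_fun (Bop'_Aop' i0 u) x
  have hy := RingHom.congr_fun (Bop'_Aop' i0 u) y
  simp only [RingHom.comp_apply, RingHom.id_apply] at hx hy
  rw [← hx, ← hy, h]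

lemma tr_Aop {i0 : Fin (n + 1)} {u : Fin (n + 1) → k} (hu : u i0 = 1) :
    (tr (evec i0 : Fin (n+1) → k)).comp (Aop i0 u) = (Aop' i0 u).comp (tr u) := by
  apply MvPolynomial.ringHom_ext
  · intro a; simp [Aop, Aop']
  · intro i
    by_cases h : i = i0
    · subst h; simp [Aop, Aop', evec, hu]
    · simp [Aop, Aop', evec, h]
      ring

lemma iot_Aop (i0 : Fin (n + 1)) (u : Fin (n + 1) → k) :
    (iot).comp (Aop i0 u) = (Aop' i0 u).comp iot := by
  apply MvPolynomial.ringHom_ext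
  · intro a; simp [Aop, Aop']
  · intro i
    by_cases h : i = i0
    · subst h; simp [Aop, Aop']
    · simp [Aop, Aop', h]

lemma tr_iff_Aop {i0 : Fin (n + 1)} {u : Fin (n + 1) → k} (hu : u i0 = 1)
    {f : MvPolynomial (Fin (n + 1)) k} :
    (tr u f = iot f) ↔ (tr (evec i0 : Fin (n+1) → k) (Aop i0 u f) = iot (Aop i0 u f)) := by
  have h1 := RingHom.congr_fun (tr_Aop hu) f
  have h2 := RingHom.congr_fun (iot_Aop i0 u) f
  simp only [RingHom.comp_apply] at h1 h2
  rw [h1, h2]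
  exact ⟨fun h => by rw [h], fun h => Aop'_inj i0 u h⟩

def theta (a : k) :
    MvPolynomial (Fin (n + 1)) (Polynomial k) →+* MvPolynomial (Fin (n + 1)) (Polynomial k) :=
  MvPolynomial.map (Polynomial.eval₂RingHom Polynomial.C (Polynomial.C a * Polynomial.X))

lemma theta_tr (a : k) (v : Fin (n + 1) → k) :
    (theta a).comp (tr v) = tr (a • v) := by
  apply MvPolynomial.ringHom_ext
  · intro b; simp [theta]
  · intro i
    simp [theta, Pi.smul_apply, smul_eq_mul, Polynomial.C_mul]
    ring

lemma theta_iot (a : k) :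
    (theta a).comp (iot : MvPolynomial (Fin (n+1)) k →+* _) = iot := by
  apply MvPolynomial.ringHom_ext
  · intro b; simp [theta]
  · intro i; simp [theta]

lemma tr_smul {v : Fin (n + 1) → k} {f : MvPolynomial (Fin (n + 1)) k} (a : k)
    (h : tr v f = iot f) : tr (a • v) f = iot f := by
  have h1 := RingHom.congr_fun (theta_tr a v) f
  have h2 := RingHom.congr_fun (theta_iot (k := k) (n := n) a) f
  simp only [RingHom.comp_apply] at h1 h2
  rw [← h1, h, h2]

def mu (w : Fin (n + 1) → k) :
    MvPolynomial (Fin (n + 1)) (Polynomial k) →+* MvPolynomial (Fin (n + 1)) (Polynomial k) :=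
  eval₂Hom MvPolynomial.C fun j => X j + C (Polynomial.X * Polynomial.C (w j))

lemma mu_tr (v w : Fin (n + 1) → k) : (mu w).comp (tr v) = tr (v + w) := by
  apply MvPolynomial.ringHom_ext
  · intro b; simp [mu]
  · intro i
    simp [mu, Pi.add_apply, Polynomial.C_add, mul_add]
    ring

lemma mu_iot (w : Fin (n + 1) → k) :
    (mu w).comp (iot : MvPolynomial (Fin (n+1)) k →+* _) = tr w := by
  apply MvPolynomial.ringHom_ext
  · intro b; simp [mu]
  · intro i; simp [mu]

lemma tr_add {v w : Fin (n + 1) → k} {f : MvPolynomial (Fin (n + 1)) k}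
    (hv : tr v f = iot f) (hw : tr w f = iot f) : tr (v + w) f = iot f := by
  have h1 := RingHom.congr_fun (mu_tr v w) f
  have h2 := RingHom.congr_fun (mu_iot (k := k) (n := n) w) f
  simp only [RingHom.comp_apply] at h1 h2
  rw [← h1, hv, h2, hw]

lemma vIdeal_smul {a : k} (ha : a ≠ 0) (v : Fin (n + 1) → k) :
    vIdeal (a • v) = vIdeal v := by
  unfold vIdeal
  congr 1
  have hs : ∀ c : Fin (n + 1) → k, (∑ i, c i * (a • v) i) = a * ∑ i, c i * v i := by
    intro c
    rw [Finset.mul_sum]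
    refine Finset.sum_congr rfl fun i _ => ?_
    simp [Pi.smul_apply, smul_eq_mul]
    ring
  ext L
  simp only [Set.mem_setOf_eq, hs, mul_eq_zero, ha, false_or]

lemma mem_pow_zero {f : MvPolynomial (Fin (n + 1)) k} {d : ℕ} (hfd : f.IsHomogeneous d) :
    f ∈ vIdeal (0 : Fin (n + 1) → k) ^ d := by
  refine homog_mem_pow hfd _ ?_
  intro m _ j _
  refine Ideal.subset_span ⟨fun i => if i = j then 1 else 0, by simp, ?_⟩
  rw [Finset.sum_eq_single j]
  · simp
  · intro i _ hij; simp [hij]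
  · intro h; exact absurd (Finset.mem_univ j) h

lemma mem_pow_iff_tr {f : MvPolynomial (Fin (n + 1)) k} {d : ℕ}
    (hfd : f.IsHomogeneous d) {v : Fin (n + 1) → k} (hv : v ≠ 0) :
    f ∈ vIdeal v ^ d ↔ tr v f = iot f := by
  obtain ⟨i0, hi0⟩ := Function.ne_iff.mp hv
  simp only [Pi.zero_apply] at hi0
  have hu : ((v i0)⁻¹ • v) i0 = 1 := by
    simp [Pi.smul_apply, smul_eq_mul, inv_mul_cancel₀ hi0]
  have hIv : vIdeal ((v i0)⁻¹ • v) = vIdeal v := vIdeal_smul (inv_ne_zero hi0) v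
  calc f ∈ vIdeal v ^ d ↔ f ∈ vIdeal ((v i0)⁻¹ • v) ^ d := by rw [hIv]
    _ ↔ Aop i0 ((v i0)⁻¹ • v) f ∈ vIdeal (evec i0 : Fin (n+1) → k) ^ d := mem_pow_Aop_iff hu
    _ ↔ NoVar i0 (Aop i0 ((v i0)⁻¹ • v) f) := mem_pow_evec_iff (Aop_isHomogeneous hfd) i0
    _ ↔ tr (evec i0 : Fin (n+1) → k) (Aop i0 ((v i0)⁻¹ • v) f)
          = iot (Aop i0 ((v i0)⁻¹ • v) f) := (tr_evec_iff i0 _).symm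
    _ ↔ tr ((v i0)⁻¹ • v) f = iot f := (tr_iff_Aop hu).symm
    _ ↔ tr v f = iot f := by
        constructor
        · intro h
          have h2 := tr_smul (v i0) h
          rwa [smul_smul, mul_inv_cancel₀ hi0, one_smul] at h2
        · intro h
          exact tr_smul _ h


def Wsub {f : MvPolynomial (Fin (n + 1)) k} {d : ℕ} (hfd : f.IsHomogeneous d) :
    Submodule k (Fin (n + 1) → k) where
  carrier := {v | f ∈ vIdeal v ^ d}
  zero_mem' := mem_pow_zero hfd
  add_mem' := by
    intro v w hv hw
    by_cases h0v : v = 0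
    · show f ∈ vIdeal (v + w) ^ d
      rw [h0v, zero_add]; exact hw
    by_cases h0w : w = 0
    · show f ∈ vIdeal (v + w) ^ d
      rw [h0w, add_zero]; exact hv
    by_cases h0vw : v + w = 0
    · show f ∈ vIdeal (v + w) ^ d
      rw [h0vw]; exact mem_pow_zero hfd
    exact (mem_pow_iff_tr hfd h0vw).mpr
      (tr_add ((mem_pow_iff_tr hfd h0v).mp hv) ((mem_pow_iff_tr hfd h0w).mp hw))
  smul_mem' := by
    intro a v hv
    by_cases ha : a = 0
    · show f ∈ vIdeal (a • v) ^ d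
      rw [ha, zero_smul]; exact mem_pow_zero hfd
    · show f ∈ vIdeal (a • v) ^ d
      rw [vIdeal_smul ha]; exact hv

lemma mem_Wsub {f : MvPolynomial (Fin (n + 1)) k} {d : ℕ} (hfd : f.IsHomogeneous d)
    (v : Fin (n + 1) → k) : v ∈ Wsub hfd ↔ f ∈ vIdeal v ^ d := Iff.rfl

end Stmt9Aux

/-- **Lemma 3.6.**  Let `H = V(f) ⊆ ℙⁿ` be a hypersurface of degree `d ≥ 1`.  The set
`M = {p ∈ H ∣ mult_p(H) = d}` is either empty or a linear subspace of `ℙⁿ`, i.e. the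
set of points lying in (the projectivization of) a linear subspace `W ⊆ k^{n+1}`. -/
theorem stmt9 (k : Type) [Field k] (n d : ℕ) (hn : 1 ≤ n) (hd : 1 ≤ d)
    (f : MvPolynomial (Fin (n + 1)) k) (hf0 : f ≠ 0) (hfd : f.IsHomogeneous d) :
    maxMultSet d f = ∅ ∨
    ∃ W : Submodule k (Fin (n + 1) → k),
      maxMultSet d f = {p | Projectivization.submodule p ≤ W} := by
  classical
  right
  refine ⟨Stmt9Aux.Wsub hfd, ?_⟩
  ext p
  have h1 : p ∈ maxMultSet d f ↔ f ∈ Stmt9Aux.vIdeal p.rep ^ d := Iff.rfl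
  rw [h1, Set.mem_setOf_eq, Projectivization.submodule_eq,
    Submodule.span_singleton_le_iff_mem, Stmt9Aux.mem_Wsub]

end
end

section
/- For integers m, n with 0 ≤ 2m ≤ n, let Y_{m,n} be the hypersurface in A^{n+1} over F_q defined by (Σ_{i=0}^{m−1} x_{2i} x_{2i+1}) + x_{2m}^2 = 1. Then: for every odd prime power q, the number of F_q-rational points of Y_{m,n} equals q^{n−m}(q^m + 1) and all of them are regular; and for every prime power q that is a power of 2, the number of F_q-rational points of Y_{m,n} equals q^n and the number of regular F_q-rational points equals q^{n−2m}(q^{2m} − 1). -/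
open MvPolynomial

noncomputable section

/-- The quadratic form `x_0 x_1 + ⋯ + x_{2m-2} x_{2m-1} + x_{2m}^2` as a polynomial in
`F[x_0, …, x_n]` (for `0 ≤ 2m ≤ n`). -/
def hypSqPoly (F : Type) [Field F] (m n : ℕ) (hmn : 2 * m ≤ n) :
    MvPolynomial (Fin (n + 1)) F :=
  (∑ i : Fin m,
    X ⟨2 * i.1, by have := i.2; omega⟩ * X ⟨2 * i.1 + 1, by have := i.2; omega⟩)
  + X ⟨2 * m, by omega⟩ ^ 2

open Finset
open scoped Classical

section Aux

variable {F : Type} [Field F] [Fintype F] {m n : ℕ} (hmn : 2 * m ≤ n)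

private lemma fiberCard (m : ℕ) (x : Fin m → F) (hx : x ≠ 0) (c : F) :
    Nat.card {y : Fin m → F // ∑ i, x i * y i = c} = Fintype.card F ^ (m - 1) := by
  classical
  obtain ⟨i₀, hi₀⟩ : ∃ i, x i ≠ 0 := Function.ne_iff.mp hx
  set f : (Fin m → F) →ₗ[F] F :=
    { toFun := fun y => ∑ i, x i * y i
      map_add' := by intro y z; simp [mul_add, Finset.sum_add_distrib]
      map_smul' := by
        intro r y
        simp [Finset.mul_sum, smul_eq_mul, mul_comm, mul_left_comm] } with hf
  have hfy : ∀ (d : F), f (Pi.single (M := fun _ : Fin m => F) i₀ ((x i₀)⁻¹ * d)) = d := by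
    intro d
    simp only [hf, LinearMap.coe_mk, AddHom.coe_mk]
    rw [Finset.sum_eq_single i₀]
    · rw [Pi.single_eq_same]; field_simp
    · intro b _ hb; simp [Pi.single_eq_of_ne hb]
    · intro h; exact absurd (Finset.mem_univ i₀) h
  have hsurj : Function.Surjective f := fun d => ⟨_, hfy d⟩
  set y₀ : Fin m → F := Pi.single i₀ ((x i₀)⁻¹ * c) with hy₀
  have hc : f y₀ = c := hfy c
  have e : {y : Fin m → F // ∑ i, x i * y i = c} ≃ LinearMap.ker f :=
    { toFun := fun y => ⟨y.1 - y₀, by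
        have : f y.1 = c := y.2
        simp [LinearMap.mem_ker, map_sub, this, hc]⟩
      invFun := fun z => ⟨z.1 + y₀, by
        have hz : f z.1 = 0 := z.2
        have : f (z.1 + y₀) = c := by rw [map_add, hz, hc, zero_add]
        exact this⟩
      left_inv := fun y => by ext; simp
      right_inv := fun z => by ext; simp }
  rw [Nat.card_congr e, Nat.card_eq_fintype_card, Module.card_eq_pow_finrank (K := F)]
  congr 1
  have h1 := LinearMap.finrank_range_add_finrank_ker f
  rw [LinearMap.range_eq_top.mpr hsurj, finrank_top, Module.finrank_self,
    Module.finrank_fin_fun] at h1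
  omega

private lemma dotCard (m : ℕ) (c : F) :
    Nat.card {p : (Fin m → F) × (Fin m → F) // ∑ i, p.1 i * p.2 i = c}
      = (Fintype.card F ^ m - 1) * Fintype.card F ^ (m - 1)
        + if c = 0 then Fintype.card F ^ m else 0 := by
  classical
  rw [Nat.card_congr (Equiv.subtypeProdEquivSigmaSubtype
    (fun (x y : Fin m → F) => ∑ i, x i * y i = c)),
    Nat.card_eq_fintype_card, Fintype.card_sigma]
  rw [Finset.sum_eq_sum_sdiff_singleton_add (Finset.mem_univ (0 : Fin m → F))]
  have h1 : ∀ x ∈ Finset.univ \ {(0 : Fin m → F)},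
      Fintype.card {y : Fin m → F // ∑ i, x i * y i = c} = Fintype.card F ^ (m - 1) := by
    intro x hx
    rw [Finset.mem_sdiff, Finset.mem_singleton] at hx
    rw [← Nat.card_eq_fintype_card]
    exact fiberCard m x hx.2 c
  rw [Finset.sum_congr rfl h1, Finset.sum_const, smul_eq_mul, Finset.card_sdiff_of_subset
    (Finset.subset_univ _), Finset.card_singleton, Finset.card_univ, Fintype.card_fun,
    Fintype.card_fin]
  congr 1
  by_cases hc : c = 0
  · subst hc
    simp only [if_pos rfl]
    rw [Fintype.card_congr (Equiv.subtypeUnivEquiv (by intro y; simp)), Fintype.card_fun,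
      Fintype.card_fin]
    simp
  · rw [if_neg hc, Fintype.card_eq_zero_iff]
    refine ⟨fun y => hc ?_⟩
    have := y.2
    simpa using this.symm

private lemma eval_hyp (a : Fin (n + 1) → F) :
    eval a (hypSqPoly F m n hmn)
      = (∑ i : Fin m, a ⟨2 * i.1, by have := i.2; omega⟩ * a ⟨2 * i.1 + 1, by have := i.2; omega⟩)
        + a ⟨2 * m, by omega⟩ ^ 2 := by
  simp [hypSqPoly]

private lemma eval_pderiv_X (a : Fin (n + 1) → F) (u j : Fin (n + 1)) :
    eval a (pderiv j (X u : MvPolynomial (Fin (n + 1)) F)) = if u = j then 1 else 0 := by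
  rcases eq_or_ne u j with h | h
  · subst h; simp
  · simp [pderiv_X_of_ne h, h]

private lemma eval_pderiv_mulX (a : Fin (n + 1) → F) (u v j : Fin (n + 1)) :
    eval a (pderiv j (X u * X v : MvPolynomial (Fin (n + 1)) F))
      = (if u = j then a v else 0) + (if v = j then a u else 0) := by
  rw [pderiv_mul, map_add, map_mul, map_mul, eval_pderiv_X, eval_pderiv_X, eval_X, eval_X]
  rcases eq_or_ne u j with h | h <;> rcases eq_or_ne v j with h2 | h2 <;>
    simp [h, h2, mul_comm]

private lemma eval_pderiv_sqX (a : Fin (n + 1) → F) (w j : Fin (n + 1)) :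
    eval a (pderiv j ((X w : MvPolynomial (Fin (n + 1)) F) ^ 2))
      = if w = j then 2 * a w else 0 := by
  rw [pderiv_pow, map_mul, map_mul, eval_pderiv_X]
  rcases eq_or_ne w j with h | h <;> simp [h, pow_one, map_natCast]

private lemma eval_pderiv (a : Fin (n + 1) → F) (j : Fin (n + 1)) :
    eval a (pderiv j (hypSqPoly F m n hmn))
      = (∑ i : Fin m,
          ((if (⟨2 * i.1, by have := i.2; omega⟩ : Fin (n + 1)) = j
              then a ⟨2 * i.1 + 1, by have := i.2; omega⟩ else 0)
            + (if (⟨2 * i.1 + 1, by have := i.2; omega⟩ : Fin (n + 1)) = j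
              then a ⟨2 * i.1, by have := i.2; omega⟩ else 0)))
        + (if (⟨2 * m, by omega⟩ : Fin (n + 1)) = j then 2 * a ⟨2 * m, by omega⟩ else 0) := by
  simp only [hypSqPoly, map_add, map_sum, eval_pderiv_mulX, eval_pderiv_sqX]

private lemma eval_pderiv_even (a : Fin (n + 1) → F) (i : Fin m) :
    eval a (pderiv (⟨2 * i.1, by have := i.2; omega⟩ : Fin (n + 1)) (hypSqPoly F m n hmn))
      = a ⟨2 * i.1 + 1, by have := i.2; omega⟩ := by
  have hi := i.2
  rw [eval_pderiv hmn]
  rw [Finset.sum_eq_single i]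
  · rw [if_pos rfl,
      if_neg (fun hh => by have := Fin.mk_eq_mk.mp hh; omega),
      if_neg (fun hh => by have := Fin.mk_eq_mk.mp hh; omega)]
    ring
  · intro b _ hb
    have hbv : b.1 ≠ i.1 := fun e => hb (Fin.ext e)
    rw [if_neg (fun hh => by have := Fin.mk_eq_mk.mp hh; omega),
      if_neg (fun hh => by have := Fin.mk_eq_mk.mp hh; omega), add_zero]
  · intro h; exact absurd (Finset.mem_univ i) h

private lemma eval_pderiv_odd (a : Fin (n + 1) → F) (i : Fin m) :
    eval a (pderiv (⟨2 * i.1 + 1, by have := i.2; omega⟩ : Fin (n + 1)) (hypSqPoly F m n hmn))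
      = a ⟨2 * i.1, by have := i.2; omega⟩ := by
  have hi := i.2
  rw [eval_pderiv hmn]
  rw [Finset.sum_eq_single i]
  · rw [if_neg (fun hh => by have := Fin.mk_eq_mk.mp hh; omega), if_pos rfl,
      if_neg (fun hh => by have := Fin.mk_eq_mk.mp hh; omega)]
    ring
  · intro b _ hb
    have hbv : b.1 ≠ i.1 := fun e => hb (Fin.ext e)
    rw [if_neg (fun hh => by have := Fin.mk_eq_mk.mp hh; omega),
      if_neg (fun hh => by have := Fin.mk_eq_mk.mp hh; omega), add_zero]
  · intro h; exact absurd (Finset.mem_univ i) h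

private lemma eval_pderiv_last (a : Fin (n + 1) → F) :
    eval a (pderiv (⟨2 * m, by omega⟩ : Fin (n + 1)) (hypSqPoly F m n hmn))
      = 2 * a ⟨2 * m, by omega⟩ := by
  rw [eval_pderiv hmn, if_pos rfl]
  rw [Finset.sum_eq_zero, zero_add]
  intro i _
  have hi := i.2
  rw [if_neg (fun hh => by have := Fin.mk_eq_mk.mp hh; omega),
    if_neg (fun hh => by have := Fin.mk_eq_mk.mp hh; omega), add_zero]

private def packF (a : Fin (n + 1) → F) :
    (F × ((Fin m → F) × (Fin m → F))) × (Fin (n - 2 * m) → F) :=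
  ((a ⟨2 * m, by omega⟩,
    (fun i => a ⟨2 * i.1, by have := i.2; omega⟩,
     fun i => a ⟨2 * i.1 + 1, by have := i.2; omega⟩)),
   fun j => a ⟨2 * m + 1 + j.1, by have := j.2; omega⟩)

private def unpackF (p : (F × ((Fin m → F) × (Fin m → F))) × (Fin (n - 2 * m) → F)) :
    Fin (n + 1) → F := fun k =>
  if h : k.1 < 2 * m then
    (if h2 : k.1 % 2 = 0 then p.1.2.1 ⟨k.1 / 2, by omega⟩ else p.1.2.2 ⟨k.1 / 2, by omega⟩)
  else if h3 : k.1 = 2 * m then p.1.1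
  else p.2 ⟨k.1 - (2 * m + 1), by have := k.2; omega⟩

private def packEquiv :
    (Fin (n + 1) → F) ≃ ((F × ((Fin m → F) × (Fin m → F))) × (Fin (n - 2 * m) → F)) where
  toFun := packF hmn
  invFun := unpackF hmn
  left_inv a := by
    funext k
    have hk := k.2
    simp only [unpackF, packF]
    split_ifs with h1 h2 h3
    · exact congrArg a (Fin.ext (show 2 * (k.1 / 2) = k.1 by omega))
    · exact congrArg a (Fin.ext (show 2 * (k.1 / 2) + 1 = k.1 by omega))
    · exact congrArg a (Fin.ext (show 2 * m = k.1 by omega))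
    · exact congrArg a (Fin.ext (show 2 * m + 1 + (k.1 - (2 * m + 1)) = k.1 by omega))
  right_inv p := by
    refine Prod.ext (Prod.ext ?_ (Prod.ext ?_ ?_)) ?_
    · simp only [packF, unpackF]
      rw [dif_neg (by omega)]
      simp
    · funext i
      have hi := i.2
      simp only [packF, unpackF]
      rw [dif_pos (by omega), dif_pos (by omega)]
      exact congrArg p.1.2.1 (Fin.ext (show 2 * i.1 / 2 = i.1 by omega))
    · funext i
      have hi := i.2
      simp only [packF, unpackF]
      rw [dif_pos (by omega), dif_neg (by omega)]
      exact congrArg p.1.2.2 (Fin.ext (show (2 * i.1 + 1) / 2 = i.1 by omega))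
    · funext j
      have hj := j.2
      simp only [packF, unpackF]
      rw [dif_neg (by omega), dif_neg (by omega)]
      exact congrArg p.2 (Fin.ext (show 2 * m + 1 + j.1 - (2 * m + 1) = j.1 by omega))

private lemma card_sol :
    Nat.card {a : Fin (n + 1) → F // eval a (hypSqPoly F m n hmn) = 1}
      = (∑ z : F, Nat.card
          {xy : (Fin m → F) × (Fin m → F) // ∑ i, xy.1 i * xy.2 i = 1 - z ^ 2})
        * Fintype.card F ^ (n - 2 * m) := by
  classical
  have e1 : {a : Fin (n + 1) → F // eval a (hypSqPoly F m n hmn) = 1}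
      ≃ {p : (F × ((Fin m → F) × (Fin m → F))) × (Fin (n - 2 * m) → F) //
          (∑ i, p.1.2.1 i * p.1.2.2 i) + p.1.1 ^ 2 = 1} :=
    (packEquiv hmn).subtypeEquiv (fun a => by rw [eval_hyp hmn]; exact Iff.rfl)
  have e2 : {p : (F × ((Fin m → F) × (Fin m → F))) × (Fin (n - 2 * m) → F) //
          (∑ i, p.1.2.1 i * p.1.2.2 i) + p.1.1 ^ 2 = 1}
      ≃ {u : F × ((Fin m → F) × (Fin m → F)) // (∑ i, u.2.1 i * u.2.2 i) + u.1 ^ 2 = 1}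
        × (Fin (n - 2 * m) → F) :=
    { toFun := fun p => (⟨p.1.1, p.2⟩, p.1.2)
      invFun := fun q => ⟨(q.1.1, q.2), q.1.2⟩
      left_inv := fun p => rfl
      right_inv := fun q => rfl }
  have e3 : {u : F × ((Fin m → F) × (Fin m → F)) // (∑ i, u.2.1 i * u.2.2 i) + u.1 ^ 2 = 1}
      ≃ Σ z : F, {xy : (Fin m → F) × (Fin m → F) // (∑ i, xy.1 i * xy.2 i) + z ^ 2 = 1} :=
    Equiv.subtypeProdEquivSigmaSubtype
      (fun (z : F) (xy : (Fin m → F) × (Fin m → F)) => (∑ i, xy.1 i * xy.2 i) + z ^ 2 = 1)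
  rw [Nat.card_congr (e1.trans e2), Nat.card_prod, Nat.card_congr e3]
  congr 1
  · rw [Nat.card_eq_fintype_card, Fintype.card_sigma]
    refine Finset.sum_congr rfl fun z _ => ?_
    rw [← Nat.card_eq_fintype_card]
    exact Nat.card_congr (Equiv.subtypeEquivRight fun xy => by rw [eq_sub_iff_add_eq])
  · rw [Nat.card_eq_fintype_card, Fintype.card_fun, Fintype.card_fin]

private lemma sum_dot :
    (∑ z : F, Nat.card
        {xy : (Fin m → F) × (Fin m → F) // ∑ i, xy.1 i * xy.2 i = 1 - z ^ 2})
      = Fintype.card F ^ m * Fintype.card F ^ m - Fintype.card F ^ m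
        + (Finset.univ.filter fun z : F => z ^ 2 = 1).card * Fintype.card F ^ m := by
  classical
  set q := Fintype.card F with hq
  set A := (q ^ m - 1) * q ^ (m - 1) with hA
  set T := (Finset.univ.filter fun z : F => z ^ 2 = 1).card with hT
  rw [← Finset.sum_filter_add_sum_filter_not Finset.univ (fun z : F => z ^ 2 = 1)]
  have hs1 : (∑ z ∈ Finset.univ.filter (fun z : F => z ^ 2 = 1), Nat.card
      {xy : (Fin m → F) × (Fin m → F) // ∑ i, xy.1 i * xy.2 i = 1 - z ^ 2}) = T * (A + q ^ m) := by
    rw [Finset.sum_congr rfl (fun z hz => ?_), Finset.sum_const, smul_eq_mul]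
    rw [Finset.mem_filter] at hz
    rw [dotCard m (1 - z ^ 2), if_pos (by rw [sub_eq_zero, hz.2])]
  have hs2 : (∑ z ∈ Finset.univ.filter (fun z : F => ¬ z ^ 2 = 1), Nat.card
      {xy : (Fin m → F) × (Fin m → F) // ∑ i, xy.1 i * xy.2 i = 1 - z ^ 2}) = (q - T) * A := by
    rw [Finset.sum_congr rfl (fun z hz => ?_), Finset.sum_const, smul_eq_mul]
    · congr 1
      rw [hT, Finset.filter_not, Finset.card_sdiff_of_subset (Finset.filter_subset _ _),
        Finset.card_univ, hq]
    · rw [Finset.mem_filter] at hz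
      rw [dotCard m (1 - z ^ 2), if_neg (fun h => hz.2 (by rwa [sub_eq_zero, eq_comm] at h)),
        add_zero]
  rw [hs1, hs2]
  have hTq : T ≤ q := by
    rw [hT, hq, ← Finset.card_univ]
    exact Finset.card_filter_le _ _
  have hqA : q * A = q ^ m * q ^ m - q ^ m := by
    rw [hA]
    cases m with
    | zero => simp
    | succ k =>
      rw [Nat.sub_mul, one_mul, Nat.mul_sub, Nat.succ_sub_one]
      congr 1 <;> ring
  have hsub : (q - T) * A = q * A - T * A := by rw [Nat.sub_mul]
  have hTA : T * A ≤ q * A := Nat.mul_le_mul_right A hTq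
  have hqm1 : 1 ≤ q ^ m := Nat.one_le_pow _ _ Fintype.card_pos
  have hle : q ^ m ≤ q ^ m * q ^ m := Nat.le_mul_of_pos_left _ (by omega)
  rw [Nat.mul_add] at hs1 ⊢
  omega

private lemma two_ne_zero_of_odd_card (h : Odd (Fintype.card F)) : (2 : F) ≠ 0 := by
  intro h2
  have hdvd : ringChar F ∣ 2 := (CharP.cast_eq_zero_iff F (ringChar F) 2).mp (by exact_mod_cast h2)
  have hprime : (ringChar F).Prime := CharP.char_is_prime F (ringChar F)
  have hchar : ringChar F = 2 := (Nat.prime_dvd_prime_iff_eq hprime Nat.prime_two).mp hdvd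
  obtain ⟨k, -, hcard⟩ := FiniteField.card F (ringChar F)
  rw [hchar] at hcard
  rw [hcard] at h
  exact (Nat.not_odd_iff_even.mpr (Nat.even_pow.mpr ⟨even_two, k.pos.ne'⟩)) h

private lemma two_eq_zero_of_pow_two_card (h : ∃ r : ℕ, Fintype.card F = 2 ^ r) :
    (2 : F) = 0 := by
  obtain ⟨r, hr⟩ := h
  obtain ⟨k, hprime, hcard⟩ := FiniteField.card F (ringChar F)
  have hdvd : ringChar F ∣ 2 ^ r := by
    rw [← hr, hcard]
    exact dvd_pow_self _ k.pos.ne'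
  have hchar : ringChar F = 2 :=
    (Nat.prime_dvd_prime_iff_eq hprime Nat.prime_two).mp (hprime.dvd_of_dvd_pow hdvd)
  have := CharP.cast_eq_zero F (ringChar F)
  rw [hchar] at this
  exact_mod_cast this

private lemma sq_eq_one_char_two (h2 : (2 : F) = 0) (z : F) : z ^ 2 = 1 ↔ z = 1 := by
  constructor
  · intro h
    have hz : (z - 1) ^ 2 = 0 := by linear_combination h + (1 - z) * h2
    have h3 := pow_eq_zero_iff (n := 2) (by norm_num) |>.mp hz
    exact sub_eq_zero.mp h3
  · rintro rfl; simp

private lemma card_sq_eq_one_odd (h2 : (2 : F) ≠ 0) :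
    (Finset.univ.filter fun z : F => z ^ 2 = 1).card = 2 := by
  have hfil : (Finset.univ.filter fun z : F => z ^ 2 = 1) = {1, -1} := by
    ext z
    simp only [Finset.mem_filter, Finset.mem_univ, true_and, Finset.mem_insert,
      Finset.mem_singleton]
    rw [sq, mul_self_eq_one_iff]
  rw [hfil, Finset.card_insert_of_notMem, Finset.card_singleton]
  simp only [Finset.mem_singleton]
  intro h
  apply h2
  linear_combination h

private lemma card_sq_eq_one_even (h2 : (2 : F) = 0) :
    (Finset.univ.filter fun z : F => z ^ 2 = 1).card = 1 := by
  have hfil : (Finset.univ.filter fun z : F => z ^ 2 = 1) = {1} := by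
    ext z
    simp only [Finset.mem_filter, Finset.mem_univ, true_and, Finset.mem_singleton]
    exact sq_eq_one_char_two h2 z
  rw [hfil, Finset.card_singleton]

private lemma nat_card_split {α : Type} [Fintype α] (P Q : α → Prop) :
    Nat.card {a : α // P a ∧ Q a} + Nat.card {a : α // P a ∧ ¬ Q a}
      = Nat.card {a : α // P a} := by
  classical
  rw [Nat.card_eq_fintype_card, Nat.card_eq_fintype_card, Nat.card_eq_fintype_card,
    Fintype.card_subtype, Fintype.card_subtype, Fintype.card_subtype,
    ← Finset.filter_filter, ← Finset.filter_filter]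
  exact Finset.card_filter_add_card_filter_not _

private lemma regular_iff (h2 : (2 : F) = 0) (a : Fin (n + 1) → F) :
    (∃ j : Fin (n + 1), eval a (pderiv j (hypSqPoly F m n hmn)) ≠ 0)
      ↔ ∃ i : Fin m, (a ⟨2 * i.1 + 1, by have := i.2; omega⟩ ≠ 0
          ∨ a ⟨2 * i.1, by have := i.2; omega⟩ ≠ 0) := by
  constructor
  · rintro ⟨j, hj⟩
    by_contra hI
    push_neg at hI
    apply hj
    rw [eval_pderiv hmn]
    have hs : (∑ i : Fin m,
        ((if (⟨2 * i.1, by have := i.2; omega⟩ : Fin (n + 1)) = j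
            then a ⟨2 * i.1 + 1, by have := i.2; omega⟩ else 0)
          + (if (⟨2 * i.1 + 1, by have := i.2; omega⟩ : Fin (n + 1)) = j
            then a ⟨2 * i.1, by have := i.2; omega⟩ else 0))) = 0 := by
      refine Finset.sum_eq_zero fun i _ => ?_
      obtain ⟨hA, hB⟩ := hI i
      split_ifs <;> simp [hA, hB]
    rw [hs, zero_add]
    split_ifs with h
    · rw [h2, zero_mul]
    · rfl
  · rintro ⟨i, hi | hi⟩
    · exact ⟨⟨2 * i.1, by have := i.2; omega⟩, by rw [eval_pderiv_even hmn]; exact hi⟩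
    · exact ⟨⟨2 * i.1 + 1, by have := i.2; omega⟩, by rw [eval_pderiv_odd hmn]; exact hi⟩

private lemma card_nonreg (h2 : (2 : F) = 0) :
    Nat.card {a : Fin (n + 1) → F // eval a (hypSqPoly F m n hmn) = 1 ∧
        ¬ ∃ j : Fin (n + 1), eval a (pderiv j (hypSqPoly F m n hmn)) ≠ 0}
      = Fintype.card F ^ (n - 2 * m) := by
  classical
  have key : ∀ a : Fin (n + 1) → F,
      (eval a (hypSqPoly F m n hmn) = 1 ∧
        ¬ ∃ j : Fin (n + 1), eval a (pderiv j (hypSqPoly F m n hmn)) ≠ 0)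
      ↔ (packEquiv hmn a).1 = ((1 : F), ((0, 0) : (Fin m → F) × (Fin m → F))) := by
    intro a
    rw [eval_hyp hmn, regular_iff hmn h2 a]
    push_neg
    show _ ↔ (packF hmn a).1 = _
    simp only [packF, Prod.mk.injEq, funext_iff, Pi.zero_apply, Prod.ext_iff]
    constructor
    · rintro ⟨hsum, hall⟩
      have hz2 : a ⟨2 * m, by omega⟩ ^ 2 = 1 := by
        rwa [Finset.sum_eq_zero (fun i _ => by rw [(hall i).2, zero_mul]), zero_add] at hsum
      exact ⟨(sq_eq_one_char_two h2 _).mp hz2,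
        fun i => (hall i).2, fun i => (hall i).1⟩
    · rintro ⟨hz, hx, hy⟩
      refine ⟨?_, fun i => ⟨hy i, hx i⟩⟩
      rw [Finset.sum_eq_zero (fun i _ => by rw [hx i, zero_mul]), zero_add, hz, one_pow]
  rw [Nat.card_congr ((packEquiv hmn).subtypeEquiv
    (q := fun p => p.1 = ((1 : F), ((0, 0) : (Fin m → F) × (Fin m → F)))) key)]
  have e : {p : (F × ((Fin m → F) × (Fin m → F))) × (Fin (n - 2 * m) → F) //
      p.1 = ((1 : F), ((0, 0) : (Fin m → F) × (Fin m → F)))} ≃ (Fin (n - 2 * m) → F) :=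
    { toFun := fun p => p.1.2
      invFun := fun w => ⟨(((1 : F), ((0, 0) : (Fin m → F) × (Fin m → F))), w), rfl⟩
      left_inv := fun p => Subtype.ext (Prod.ext p.2.symm rfl)
      right_inv := fun w => rfl }
  rw [Nat.card_congr e, Nat.card_eq_fintype_card, Fintype.card_fun, Fintype.card_fin]

end Aux

/-- **Lemma 4.11.**  For `0 ≤ 2m ≤ n`, let `Y_{m,n} ⊆ A^{n+1}` be the hypersurface
`x_0 x_1 + ⋯ + x_{2m-2} x_{2m-1} + x_{2m}^2 = 1` over the finite field `F` with `q`
elements.  If `q` is odd, then `Y_{m,n}` has exactly `q^{n-m} (q^m + 1)` rational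
points over `F` and all of them are regular; if `q` is a power of `2`, then `Y_{m,n}`
has exactly `q^n` rational points over `F`, of which exactly `q^{n-2m} (q^{2m} - 1)`
are regular. -/
theorem stmt16 (F : Type) [Field F] [Fintype F] (m n : ℕ) (hmn : 2 * m ≤ n) :
    (Odd (Fintype.card F) →
      Nat.card {a : Fin (n + 1) → F // eval a (hypSqPoly F m n hmn) = 1}
          = Fintype.card F ^ (n - m) * (Fintype.card F ^ m + 1) ∧
      ∀ a : Fin (n + 1) → F, eval a (hypSqPoly F m n hmn) = 1 →
        ∃ j : Fin (n + 1), eval a (pderiv j (hypSqPoly F m n hmn)) ≠ 0) ∧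
    ((∃ r : ℕ, Fintype.card F = 2 ^ r) →
      Nat.card {a : Fin (n + 1) → F // eval a (hypSqPoly F m n hmn) = 1}
          = Fintype.card F ^ n ∧
      Nat.card {a : Fin (n + 1) → F // eval a (hypSqPoly F m n hmn) = 1 ∧
          ∃ j : Fin (n + 1), eval a (pderiv j (hypSqPoly F m n hmn)) ≠ 0}
        = Fintype.card F ^ (n - 2 * m) * (Fintype.card F ^ (2 * m) - 1)) := by
  classical
  have hqm1 : 1 ≤ Fintype.card F ^ m := Nat.one_le_pow _ _ Fintype.card_pos
  have hle : Fintype.card F ^ m ≤ Fintype.card F ^ m * Fintype.card F ^ m :=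
    Nat.le_mul_of_pos_left _ (by omega)
  constructor
  · intro hodd
    have h2 : (2 : F) ≠ 0 := two_ne_zero_of_odd_card hodd
    constructor
    · rw [card_sol hmn, sum_dot, card_sq_eq_one_odd h2]
      have e : Fintype.card F ^ m * Fintype.card F ^ m - Fintype.card F ^ m
          + 2 * Fintype.card F ^ m
          = Fintype.card F ^ m * Fintype.card F ^ m + Fintype.card F ^ m := by omega
      rw [e, show n - m = (n - 2 * m) + m by omega, pow_add]
      ring
    · intro a ha
      by_contra hc
      push_neg at hc
      have hx : ∀ i : Fin m, a ⟨2 * i.1, by have := i.2; omega⟩ = 0 := fun i => by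
        have h := hc ⟨2 * i.1 + 1, by have := i.2; omega⟩
        rwa [eval_pderiv_odd hmn] at h
      have hz : a ⟨2 * m, by omega⟩ = 0 := by
        have h := hc ⟨2 * m, by omega⟩
        rw [eval_pderiv_last hmn] at h
        rcases mul_eq_zero.mp h with h' | h'
        · exact absurd h' h2
        · exact h'
      rw [eval_hyp hmn,
        Finset.sum_eq_zero (fun i _ => by rw [hx i, zero_mul]), hz] at ha
      simp at ha
  · intro hpow
    have h2 : (2 : F) = 0 := two_eq_zero_of_pow_two_card hpow
    have htotal : Nat.card {a : Fin (n + 1) → F // eval a (hypSqPoly F m n hmn) = 1}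
        = Fintype.card F ^ n := by
      rw [card_sol hmn, sum_dot, card_sq_eq_one_even h2]
      have e : Fintype.card F ^ m * Fintype.card F ^ m - Fintype.card F ^ m
          + 1 * Fintype.card F ^ m = Fintype.card F ^ m * Fintype.card F ^ m := by omega
      rw [e, ← pow_add, ← pow_add]
      congr 1
      omega
    refine ⟨htotal, ?_⟩
    have hsplit := nat_card_split
      (fun a : Fin (n + 1) → F => eval a (hypSqPoly F m n hmn) = 1)
      (fun a : Fin (n + 1) → F => ∃ j : Fin (n + 1), eval a (pderiv j (hypSqPoly F m n hmn)) ≠ 0)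
    rw [htotal, card_nonreg hmn h2] at hsplit
    have hfin : Fintype.card F ^ (n - 2 * m) * (Fintype.card F ^ (2 * m) - 1)
        = Fintype.card F ^ n - Fintype.card F ^ (n - 2 * m) := by
      rw [Nat.mul_sub, mul_one, ← pow_add, show n - 2 * m + 2 * m = n by omega]
    omega

end
end
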